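/- arXiv:1807.07936 — 7 statements merged into one kernel-verified Lean document; each statement's English description precedes it below -/
import Mathlib

section
/- For every integer m ≥ 1 there is a compact set K ⊂ ℝ and jets F, G, H of order m on K such that: (1) F, G, and H are Whitney fields of class C^m on K; (2) condition (★) holds; yet there is no C^m horizontal curve (f,g,h): ℝ → ℍ¹ extending the triple (F,G,H). -/
/-!
Take `K = {0} ∪ {2⁻ⁿ}`, `F = G = 0`, and `H` with value `t ^ (2 m)` and all higher
entries zero. Two distinct points of `K` lie at distance comparable to their size, so
`|b ^ (2 m) - a ^ (2 m)|` is `O(|b - a| ^ (2 m))` and `H` is a Whitney field; (★) holds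
because `F = G = 0`. A horizontal extension would have `f, g` flat to order `m` on `K`, hence
`f, g = o(L ^ m)` and `f', g' = o(L ^ (m - 1))` on `[2⁻ⁿ⁻¹, 2⁻ⁿ]` of length `L`, so
`h' = 2 (f' g - g' f)` would give `h(2⁻ⁿ) - h(2⁻ⁿ⁻¹) = o(L ^ (2 m))`, whereas `t ^ (2 m)`
increases there by `(4 ^ m - 1) L ^ (2 m)`.
-/

open Set MeasureTheory intervalIntegral

/-- The Taylor polynomial of order `m` of the jet `F` at `a`. -/
noncomputable def TP (m : ℕ) (F : ℕ → ℝ → ℝ) (a x : ℝ) : ℝ :=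
  ∑ k ∈ Finset.range (m + 1), F k a * (x - a) ^ k / (Nat.factorial k : ℝ)

/-- A jet of order `m` on `K`: a collection of continuous functions on `K`. -/
def IsJet (m : ℕ) (K : Set ℝ) (F : ℕ → ℝ → ℝ) : Prop :=
  ∀ k ≤ m, ContinuousOn (F k) K

/-- A Whitney field of class `C^m` on `K`. -/
def IsWhitneyField (m : ℕ) (K : Set ℝ) (F : ℕ → ℝ → ℝ) : Prop :=
  ∀ k ≤ m, ∀ ε > (0 : ℝ), ∃ δ > (0 : ℝ), ∀ a ∈ K, ∀ b ∈ K, |b - a| < δ →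
    |F k b - ∑ l ∈ Finset.range (m - k + 1), F (k + l) a * (b - a) ^ l / (Nat.factorial l : ℝ)|
      ≤ ε * |b - a| ^ (m - k)

/-- Condition (★). -/
def StarCond (m : ℕ) (K : Set ℝ) (F G H : ℕ → ℝ → ℝ) : Prop :=
  ∀ k, 1 ≤ k → k ≤ m → ∀ t ∈ K,
    H k t = 2 * ∑ j ∈ Finset.range k, (Nat.choose (k - 1) j : ℝ) *
      (F (k - j) t * G j t - G (k - j) t * F j t)

/-- The area discrepancy `A(a,b)`. -/
noncomputable def areaA (m : ℕ) (F G H : ℕ → ℝ → ℝ) (a b : ℝ) : ℝ :=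
  H 0 b - H 0 a
    - 2 * ∫ x in a..b, (deriv (TP m F a) x * TP m G a x - deriv (TP m G a) x * TP m F a x)
    + 2 * F 0 a * (G 0 b - TP m G a b) - 2 * G 0 a * (F 0 b - TP m F a b)

/-- The velocity `V(a,b)`. -/
noncomputable def velV (m : ℕ) (F G : ℕ → ℝ → ℝ) (a b : ℝ) : ℝ :=
  (b - a) ^ (2 * m) + (b - a) ^ m *
    ∫ x in a..b, (|deriv (TP m F a) x| + |deriv (TP m G a) x|)

/-- `A(a,b)/V(a,b) → 0` uniformly as `(b-a) ↘ 0` with `a, b ∈ K`. -/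
def UniformAV (m : ℕ) (K : Set ℝ) (F G H : ℕ → ℝ → ℝ) : Prop :=
  ∀ ε > (0 : ℝ), ∃ δ > (0 : ℝ), ∀ a ∈ K, ∀ b ∈ K, 0 < b - a → b - a < δ →
    |areaA m F G H a b| ≤ ε * velV m F G a b

/-- A horizontal curve in the first Heisenberg group. -/
def IsHorizontal (f g h : ℝ → ℝ) : Prop :=
  ∀ t, deriv h t = 2 * (deriv f t * g t - deriv g t * f t)

/-- The triple of jets `(F, G, H)` extends to the curve `(f, g, h)`. -/
def ExtendsJets (m : ℕ) (K : Set ℝ) (F G H : ℕ → ℝ → ℝ) (f g h : ℝ → ℝ) : Prop :=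
  ∀ x ∈ K, ∀ k ≤ m, iteratedDeriv k f x = F k x ∧ iteratedDeriv k g x = G k x ∧
    iteratedDeriv k h x = H k x

theorem abs_iteratedDeriv_le_of_iteratedDeriv_eq_zero {m : ℕ} {f : ℝ → ℝ}
    (hf : ContDiff ℝ m f) {a b C : ℝ} (hz : ∀ k < m, iteratedDeriv k f a = 0)
    (hC : ∀ x ∈ Icc a b, |iteratedDeriv m f x| ≤ C) {j : ℕ} (hj : j ≤ m) {x : ℝ}
    (hx : x ∈ Icc a b) : |iteratedDeriv (m - j) f x| ≤ C * (b - a) ^ j := by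
  induction j generalizing x with
  | zero => simpa using hC x hx
  | succ j ih =>
    have hk : m - (j + 1) < m := by omega
    have hderiv : ∀ y ∈ Icc a b, HasDerivWithinAt (iteratedDeriv (m - (j + 1)) f)
        (iteratedDeriv (m - j) f y) (Icc a b) y := fun y _ => by
      rw [show m - j = m - (j + 1) + 1 by omega, iteratedDeriv_succ]
      exact ((hf.differentiable_iteratedDeriv _ (by exact_mod_cast hk)) y).hasDerivAt
        |>.hasDerivWithinAt
    have hmvt := norm_image_sub_le_of_norm_deriv_le_segment' hderiv
      (fun y hy => ih (by omega) (Ico_subset_Icc_self hy)) x hx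
    rw [hz _ hk, sub_zero, Real.norm_eq_abs] at hmvt
    have hC0 : 0 ≤ C := (abs_nonneg _).trans (hC a ⟨le_rfl, hx.1.trans hx.2⟩)
    calc |iteratedDeriv (m - (j + 1)) f x| ≤ C * (b - a) ^ j * (x - a) := hmvt
      _ ≤ C * (b - a) ^ j * (b - a) := by
        gcongr
        · exact mul_nonneg hC0 (pow_nonneg (by linarith [hx.1, hx.2]) j)
        · exact hx.2
      _ = C * (b - a) ^ (j + 1) := by ring

theorem IsHorizontal.abs_sub_le {m : ℕ} (hm : 1 ≤ m) {f g h : ℝ → ℝ}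
    (hhor : IsHorizontal f g h) (hf : ContDiff ℝ m f) (hg : ContDiff ℝ m g)
    (hh : Differentiable ℝ h) {a b C : ℝ} (hab : a ≤ b)
    (hfz : ∀ k < m, iteratedDeriv k f a = 0) (hgz : ∀ k < m, iteratedDeriv k g a = 0)
    (hfC : ∀ x ∈ Icc a b, |iteratedDeriv m f x| ≤ C)
    (hgC : ∀ x ∈ Icc a b, |iteratedDeriv m g x| ≤ C) :
    |h b - h a| ≤ 4 * C ^ 2 * (b - a) ^ (2 * m) := by
  have hC0 : 0 ≤ C := (abs_nonneg _).trans (hfC a ⟨le_rfl, hab⟩)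
  have value {φ : ℝ → ℝ} (hφ : ContDiff ℝ m φ) (hz : ∀ k < m, iteratedDeriv k φ a = 0)
      (hC : ∀ x ∈ Icc a b, |iteratedDeriv m φ x| ≤ C) {x : ℝ} (hx : x ∈ Icc a b) :
      |φ x| ≤ C * (b - a) ^ m := by
    simpa using abs_iteratedDeriv_le_of_iteratedDeriv_eq_zero hφ hz hC le_rfl hx
  have slope {φ : ℝ → ℝ} (hφ : ContDiff ℝ m φ) (hz : ∀ k < m, iteratedDeriv k φ a = 0)
      (hC : ∀ x ∈ Icc a b, |iteratedDeriv m φ x| ≤ C) {x : ℝ} (hx : x ∈ Icc a b) :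
      |deriv φ x| ≤ C * (b - a) ^ (m - 1) := by
    simpa [show m - (m - 1) = 1 by omega] using
      abs_iteratedDeriv_le_of_iteratedDeriv_eq_zero hφ hz hC (Nat.sub_le m 1) hx
  have hderiv : ∀ x ∈ Ico a b, ‖deriv h x‖ ≤ 4 * C ^ 2 * (b - a) ^ (2 * m - 1) := by
    intro x hx
    have hx := Ico_subset_Icc_self hx
    have hpow : (b - a) ^ (2 * m - 1) = (b - a) ^ (m - 1) * (b - a) ^ m := by
      rw [← pow_add]; congr 1; omega
    rw [Real.norm_eq_abs, hhor x, hpow]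
    calc |2 * (deriv f x * g x - deriv g x * f x)|
        ≤ 2 * (|deriv f x| * |g x| + |deriv g x| * |f x|) := by
          rw [abs_mul, abs_two, ← abs_mul, ← abs_mul]
          gcongr
          exact abs_sub _ _
      _ ≤ 2 * (C * (b - a) ^ (m - 1) * (C * (b - a) ^ m)
            + C * (b - a) ^ (m - 1) * (C * (b - a) ^ m)) := by
          gcongr
          exacts [slope hf hfz hfC hx, value hg hgz hgC hx, slope hg hgz hgC hx,
            value hf hfz hfC hx]
      _ = 4 * C ^ 2 * ((b - a) ^ (m - 1) * (b - a) ^ m) := by ring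
  have hmvt := norm_image_sub_le_of_norm_deriv_le_segment'
    (fun x _ => (hh x).hasDerivAt.hasDerivWithinAt) hderiv b ⟨hab, le_rfl⟩
  rw [Real.norm_eq_abs] at hmvt
  calc |h b - h a| ≤ 4 * C ^ 2 * (b - a) ^ (2 * m - 1) * (b - a) := hmvt
    _ = 4 * C ^ 2 * (b - a) ^ (2 * m) := by
      rw [mul_assoc, ← pow_succ]; congr 2; omega

namespace AreaCounterexample

def dyadicSet : Set ℝ := insert 0 (range fun n : ℕ => (2⁻¹ : ℝ) ^ n)

theorem isCompact_dyadicSet : IsCompact dyadicSet :=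
  (tendsto_pow_atTop_nhds_zero_of_lt_one (by norm_num) (by norm_num)).isCompact_insert_range

theorem nonneg_of_mem_dyadicSet {x : ℝ} (hx : x ∈ dyadicSet) : 0 ≤ x := by
  rcases hx with rfl | ⟨n, rfl⟩
  exacts [le_rfl, by positivity]

theorem two_mul_le_of_mem_dyadicSet {a b : ℝ} (ha : a ∈ dyadicSet) (hb : b ∈ dyadicSet)
    (hab : a < b) : 2 * a ≤ b := by
  rcases hb with rfl | ⟨n, rfl⟩
  · linarith [nonneg_of_mem_dyadicSet ha]
  rcases ha with rfl | ⟨p, rfl⟩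
  · simp only [mul_zero]; positivity
  have hnp : n + 1 ≤ p :=
    (pow_lt_pow_iff_right_of_lt_one₀ (by norm_num) (by norm_num)).mp hab
  calc 2 * (2⁻¹ : ℝ) ^ p ≤ 2 * (2⁻¹ : ℝ) ^ (n + 1) := by
        gcongr 2 * ?_
        exact pow_le_pow_of_le_one (by norm_num) (by norm_num) hnp
    _ = (2⁻¹ : ℝ) ^ n := by ring

theorem abs_pow_sub_pow_le_of_mem_dyadicSet (n : ℕ) {a b : ℝ} (ha : a ∈ dyadicSet)
    (hb : b ∈ dyadicSet) : |b ^ n - a ^ n| ≤ (2 * |b - a|) ^ n := by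
  wlog hab : a ≤ b generalizing a b
  · simpa only [abs_sub_comm] using this hb ha (le_of_not_ge hab)
  rcases hab.eq_or_lt with rfl | hlt
  · simp
  have ha0 := nonneg_of_mem_dyadicSet ha
  have hb2 : b ≤ 2 * |b - a| := by
    rw [abs_of_pos (sub_pos.2 hlt)]
    linarith [two_mul_le_of_mem_dyadicSet ha hb hlt]
  rw [abs_of_nonneg (sub_nonneg.2 (pow_le_pow_left₀ ha0 hab n))]
  calc b ^ n - a ^ n ≤ b ^ n := sub_le_self _ (pow_nonneg ha0 n)
    _ ≤ (2 * |b - a|) ^ n := pow_le_pow_left₀ (ha0.trans hab) hb2 n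

def flatPowJet (m k : ℕ) (t : ℝ) : ℝ := if k = 0 then t ^ (2 * m) else 0

theorem isJet_flatPowJet (m : ℕ) (K : Set ℝ) : IsJet m K (flatPowJet m) := fun k _ => by
  unfold flatPowJet
  split_ifs <;> fun_prop

theorem isWhitneyField_zero (m : ℕ) (K : Set ℝ) : IsWhitneyField m K 0 := by
  intro k _ ε hε
  refine ⟨1, one_pos, fun a _ b _ _ => ?_⟩
  simp only [Pi.zero_apply, zero_mul, zero_div, Finset.sum_const_zero, sub_zero, abs_zero]
  positivity

theorem isWhitneyField_flatPowJet {m : ℕ} (hm : 1 ≤ m) :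
    IsWhitneyField m dyadicSet (flatPowJet m) := by
  intro k _ ε hε
  rcases eq_or_ne k 0 with rfl | hk
  · refine ⟨min 1 (ε / 4 ^ m), by positivity, fun a ha b hb hab => ?_⟩
    have hsum : ∑ l ∈ Finset.range (m - 0 + 1),
        flatPowJet m (0 + l) a * (b - a) ^ l / (l.factorial : ℝ) = a ^ (2 * m) := by
      simp [flatPowJet, Finset.sum_range_succ']
    set d := |b - a|
    have hd1 : d ≤ 1 := hab.le.trans (min_le_left _ _)
    have hdε : 4 ^ m * d ≤ ε := by
      have := hab.le.trans (min_le_right _ _)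
      rwa [le_div_iff₀ (by positivity), mul_comm] at this
    rw [hsum, Nat.sub_zero]
    calc |flatPowJet m 0 b - a ^ (2 * m)| ≤ (2 * d) ^ (2 * m) := by
          simpa [flatPowJet] using abs_pow_sub_pow_le_of_mem_dyadicSet (2 * m) ha hb
      _ = 4 ^ m * d ^ m * d ^ m := by rw [pow_mul, mul_pow]; norm_num; ring
      _ ≤ 4 ^ m * d * d ^ m := by
          gcongr
          exact pow_le_of_le_one (abs_nonneg _) hd1 (by omega)
      _ ≤ ε * d ^ m := by gcongr
  · refine ⟨1, one_pos, fun a _ b _ _ => ?_⟩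
    simp only [flatPowJet, hk, ↓reduceIte, Nat.add_eq_zero_iff, false_and, zero_mul, zero_div,
      Finset.sum_const_zero, sub_self, abs_zero]
    positivity

theorem starCond_zero_zero_flatPowJet (m : ℕ) (K : Set ℝ) :
    StarCond m K 0 0 (flatPowJet m) := by
  intro k hk _ t _
  simp [flatPowJet, show k ≠ 0 by omega]

theorem not_extendsJets_flatPowJet {m : ℕ} (hm : 1 ≤ m) {f g h : ℝ → ℝ}
    (hf : ContDiff ℝ m f) (hg : ContDiff ℝ m g) (hh : Differentiable ℝ h)
    (hhor : IsHorizontal f g h) : ¬ ExtendsJets m dyadicSet 0 0 (flatPowJet m) f g h := by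
  intro hext
  have hfz {x} (hx : x ∈ dyadicSet) {k} (hk : k ≤ m) : iteratedDeriv k f x = 0 :=
    (hext x hx k hk).1
  have hgz {x} (hx : x ∈ dyadicSet) {k} (hk : k ≤ m) : iteratedDeriv k g x = 0 :=
    (hext x hx k hk).2.1
  have small {φ : ℝ → ℝ} (hφ : ContDiff ℝ m φ) (hz : iteratedDeriv m φ 0 = 0) :
      ∀ᶠ x in nhds 0, |iteratedDeriv m φ x| ≤ 1 / 2 := by
    have hlim := ((hφ.continuous_iteratedDeriv' m).tendsto 0).abs
    rw [hz, abs_zero] at hlim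
    exact hlim.eventually_le_const (by norm_num)
  have h0 : (0 : ℝ) ∈ dyadicSet := mem_insert 0 _
  obtain ⟨δ, hδ, hball⟩ := Metric.eventually_nhds_iff.mp
    ((small hf (hfz h0 le_rfl)).and (small hg (hgz h0 le_rfl)))
  obtain ⟨n, hn⟩ := exists_pow_lt_of_lt_one hδ (by norm_num : (2⁻¹ : ℝ) < 1)
  set a : ℝ := 2⁻¹ ^ (n + 1)
  have ha : a ∈ dyadicSet := mem_insert_of_mem _ ⟨n + 1, rfl⟩
  have hb : 2 * a ∈ dyadicSet := mem_insert_of_mem _ ⟨n, by simp only [a]; ring⟩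
  have ha0 : 0 < a := by positivity
  have hball' : ∀ x ∈ Icc a (2 * a), dist x 0 < δ := fun x hx => by
    rw [Real.dist_eq, sub_zero, abs_of_pos (ha0.trans_le hx.1)]
    calc x ≤ 2 * a := hx.2
      _ = 2⁻¹ ^ n := by simp only [a]; ring
      _ < δ := hn
  have hvalue {x} (hx : x ∈ dyadicSet) : h x = x ^ (2 * m) := by
    simpa [flatPowJet] using (hext x hx 0 (Nat.zero_le m)).2.2
  have hsweep := hhor.abs_sub_le hm hf hg hh
    (by linarith) (fun k hk => hfz ha hk.le) (fun k hk => hgz ha hk.le)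
    (fun x hx => (hball (hball' x hx)).1) (fun x hx => (hball (hball' x hx)).2)
  rw [hvalue ha, hvalue hb, mul_pow, pow_mul 2, show 2 * a - a = a by ring] at hsweep
  have h4 : (4 : ℝ) ≤ (2 ^ 2) ^ m := by
    calc (4 : ℝ) = (2 ^ 2) ^ 1 := by norm_num
      _ ≤ (2 ^ 2) ^ m := pow_le_pow_right₀ (by norm_num) hm
  have hpos : 0 < a ^ (2 * m) := by positivity
  generalize (2 ^ 2 : ℝ) ^ m = P, a ^ (2 * m) = A at *
  linarith [le_abs_self (P * A - A), mul_le_mul_of_nonneg_right h4 hpos.le]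

end AreaCounterexample

open AreaCounterexample in
/-- Proposition 4.1: for every `m ≥ 1` there are a compact set `K ⊆ ℝ` and
jets `F, G, H` of order `m` on `K` which are Whitney fields of class `C^m` and satisfy
condition (★), yet no `C^m` horizontal curve `(f,g,h) : ℝ → ℍ¹` extends the triple `(F,G,H)`. -/
theorem importance_of_area_condition (m : ℕ) (hm : 1 ≤ m) :
    ∃ (K : Set ℝ) (F G H : ℕ → ℝ → ℝ),
      IsCompact K ∧ IsJet m K F ∧ IsJet m K G ∧ IsJet m K H ∧
      IsWhitneyField m K F ∧ IsWhitneyField m K G ∧ IsWhitneyField m K H ∧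
      StarCond m K F G H ∧
      ¬ ∃ f g h : ℝ → ℝ, ContDiff ℝ (m : ℕ∞) f ∧ ContDiff ℝ (m : ℕ∞) g ∧
          ContDiff ℝ (m : ℕ∞) h ∧ IsHorizontal f g h ∧ ExtendsJets m K F G H f g h := by
  refine ⟨dyadicSet, 0, 0, flatPowJet m, isCompact_dyadicSet,
    fun _ _ => continuousOn_const, fun _ _ => continuousOn_const, isJet_flatPowJet m _,
    isWhitneyField_zero m _, isWhitneyField_zero m _, isWhitneyField_flatPowJet hm,
    starCond_zero_zero_flatPowJet m _, ?_⟩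
  rintro ⟨f, g, h, hf, hg, hh, hhor, hext⟩
  exact not_extendsJets_flatPowJet hm hf hg (hh.differentiable (by norm_cast; omega)) hhor hext
end

section
/- Let P be a real polynomial of degree at most n with n ≥ 1, let a < b, and let M = max_{x ∈ [a,b]} |P(x)|. Then there exists a closed subinterval I ⊂ [a,b] of length at least (b−a)/(4n²) such that |P(x)| ≥ M/2 for all x ∈ I. -/
/-!
Substituting `x = (a + b) / 2 + (b - a) / 2 * cos θ` turns `P` into a real trigonometric
polynomial `f` of degree at most `n`, and `|f|` attains its maximum `M` at some
`θ₀ ∈ [0, π]`. Then `|f| ≥ M / 2` wherever `|θ - θ₀| ≤ π / (3n)`: if, say, `f θ₀ = M` but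
`f θ₁ < M / 2` there, then `c * cos (n * (θ - θ₀) + s) - f θ`, with `c` slightly above `M`
and `s > 0` small, changes sign `2n + 1` times within one period. This is impossible, since
`e^{inθ} f(θ)` is a polynomial of degree `2n` in `e^{iθ}`, so a nonzero trigonometric
polynomial of degree `n` has at most `2n` zeros per period. Finally, an arc of length
`π / (3n)` inside `[0, π]` is mapped onto an interval of length at least
`(b - a) / 2 * (1 - cos (π / (3n))) ≥ (b - a) / (4n²)`.
-/

open Set Polynomial Real

theorem exists_mem_Ioo_eq_zero_of_neg_one_pow {G : ℝ → ℝ} {a b : ℝ} (hab : a ≤ b)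
    (hG : ContinuousOn G (Icc a b)) {j : ℕ} (ha : 0 < (-1) ^ j * G a)
    (hb : 0 < (-1) ^ (j + 1) * G b) : ∃ x ∈ Ioo a b, G x = 0 := by
  rcases neg_one_pow_eq_or ℝ j with h | h <;> simp only [h, pow_succ] at ha hb
  · exact intermediate_value_Ioo' hab hG ⟨by linarith, by linarith⟩
  · exact intermediate_value_Ioo hab hG ⟨by linarith, by linarith⟩

theorem exists_strictMono_zeros_of_alternating {G : ℝ → ℝ} (hG : Continuous G) {p : ℕ → ℝ}
    (hp : StrictMono p) {N : ℕ} (hsign : ∀ j ≤ N, 0 < (-1) ^ j * G (p j)) :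
    ∃ ζ : Fin N → ℝ, StrictMono ζ ∧ ∀ i, ζ i ∈ Ioo (p 0) (p N) ∧ G (ζ i) = 0 := by
  have hzero (i : Fin N) : ∃ x ∈ Ioo (p i) (p (i + 1)), G x = 0 :=
    exists_mem_Ioo_eq_zero_of_neg_one_pow (hp (Nat.lt_succ_self i)).le hG.continuousOn
      (hsign i i.2.le) (hsign (i + 1) i.2)
  choose ζ hζ hζ0 using hzero
  refine ⟨ζ, fun i k hik => ?_, fun i => ⟨⟨?_, ?_⟩, hζ0 i⟩⟩
  · exact ((hζ i).2.trans_le (hp.monotone (Nat.succ_le_of_lt hik))).trans (hζ k).1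
  · exact (hp.monotone (Nat.zero_le _)).trans_lt (hζ i).1
  · exact (hζ i).2.trans_le (hp.monotone i.2)

section

open Complex

/-- Real trigonometric polynomials of degree at most `n`, encoded as the functions `f` for which
`e^{inθ} f(θ)` is a complex polynomial of degree at most `2n` in `e^{iθ}`. -/
def trigPolynomialLE (n : ℕ) : Submodule ℝ (ℝ → ℝ) where
  carrier := {f | ∃ F : ℂ[X], F.natDegree ≤ 2 * n ∧
    ∀ θ : ℝ, F.eval (exp (θ * I)) = exp (θ * I) ^ n * f θ}
  zero_mem' := ⟨0, by simp, by simp⟩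
  add_mem' := by
    rintro f g ⟨F, hFdeg, hF⟩ ⟨G, hGdeg, hG⟩
    exact ⟨F + G, natDegree_add_le_of_degree_le hFdeg hGdeg, fun θ => by simp [hF, hG, mul_add]⟩
  smul_mem' := by
    rintro c f ⟨F, hFdeg, hF⟩
    exact ⟨C (c : ℂ) * F, (natDegree_C_mul_le _ _).trans hFdeg,
      fun θ => by simp [hF]; ring⟩

namespace trigPolynomialLE

variable {n k : ℕ} {f g : ℝ → ℝ}

theorem mono (h : n ≤ k) : trigPolynomialLE n ≤ trigPolynomialLE k := by
  rintro f ⟨F, hFdeg, hF⟩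
  refine ⟨X ^ (k - n) * F, natDegree_mul_le.trans ?_, fun θ => ?_⟩
  · rw [natDegree_X_pow]; omega
  · rw [eval_mul, eval_X_pow, hF, ← mul_assoc, ← pow_add, Nat.sub_add_cancel h]

theorem one_mem_zero : (1 : ℝ → ℝ) ∈ trigPolynomialLE 0 := ⟨1, by simp, by simp⟩

theorem mul_mem (hf : f ∈ trigPolynomialLE n) (hg : g ∈ trigPolynomialLE k) :
    f * g ∈ trigPolynomialLE (n + k) := by
  obtain ⟨F, hFdeg, hF⟩ := hf
  obtain ⟨G, hGdeg, hG⟩ := hg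
  refine ⟨F * G, natDegree_mul_le.trans (by omega), fun θ => ?_⟩
  simp only [eval_mul, hF, hG, Pi.mul_apply, ofReal_mul]
  ring

theorem pow_mem (hf : f ∈ trigPolynomialLE n) (k : ℕ) : f ^ k ∈ trigPolynomialLE (k * n) := by
  induction k with
  | zero => simpa using one_mem_zero
  | succ k ih => simpa [pow_succ, Nat.succ_mul] using mul_mem ih hf

theorem cos_mem : Real.cos ∈ trigPolynomialLE 1 := by
  refine ⟨C (1 / 2) * (X ^ 2 + 1), ?_, fun θ => ?_⟩
  · refine (natDegree_C_mul_le _ _).trans ?_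
    rw [natDegree_add_eq_left_of_natDegree_lt] <;> simp
  · simp only [eval_mul, eval_C, eval_add, eval_pow, eval_X, eval_one, pow_one, ofReal_cos,
      Complex.cos, neg_mul, Complex.exp_neg]
    field_simp

theorem eval_cos_mem {Q : ℝ[X]} (hQ : Q.natDegree ≤ n) :
    (fun θ => Q.eval (Real.cos θ)) ∈ trigPolynomialLE n := by
  have hsum : (fun θ => Q.eval (Real.cos θ)) =
      ∑ i ∈ Finset.range (n + 1), Q.coeff i • Real.cos ^ i := by
    ext θ
    simp [eval_eq_sum_range' (Nat.lt_succ_of_le hQ)]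
  rw [hsum]
  refine Submodule.sum_mem _ fun i hi => Submodule.smul_mem _ _ (mono ?_ (pow_mem cos_mem i))
  simpa [Nat.lt_succ_iff] using hi

theorem eval_add_mul_cos_mem {P : ℝ[X]} (hP : P.natDegree ≤ n) (m r : ℝ) :
    (fun θ => P.eval (m + r * Real.cos θ)) ∈ trigPolynomialLE n := by
  have hdeg : (P.comp (C r * X + C m)).natDegree ≤ n :=
    natDegree_comp_le.trans (by nlinarith [natDegree_linear_le (a := r) (b := m)])
  simpa [add_comm] using eval_cos_mem hdeg

theorem cos_nat_mul_add_mem (φ : ℝ) : (fun θ => Real.cos (n * θ + φ)) ∈ trigPolynomialLE n := by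
  refine ⟨C (exp (φ * I) / 2) * X ^ (2 * n) + C (exp (↑(-φ) * I) / 2), ?_, fun θ => ?_⟩
  · refine natDegree_add_le_of_degree_le ((natDegree_C_mul_le _ _).trans ?_) (by simp)
    simp
  · have hexp : exp (↑(n * θ + φ) * I) = exp (θ * I) ^ n * exp (φ * I) := by
      rw [← Complex.exp_nat_mul, ← Complex.exp_add]; push_cast; ring_nf
    simp only [eval_add, eval_mul, eval_C, eval_pow, eval_X, ofReal_cos, Complex.cos, neg_mul,
      Complex.exp_neg, hexp, ofReal_neg]
    field_simp
    ring

theorem comp_neg_mem (hf : f ∈ trigPolynomialLE n) :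
    (fun θ => f (-θ)) ∈ trigPolynomialLE n := by
  obtain ⟨F, hFdeg, hF⟩ := hf
  refine ⟨F.map (starRingEnd ℂ), natDegree_map_le.trans hFdeg, fun θ => ?_⟩
  have hconj : exp (θ * I) = starRingEnd ℂ (exp (↑(-θ) * I)) := by
    rw [← Complex.exp_conj]; simp
  rw [hconj, eval_map_apply, hF]
  simp

theorem continuous_of_mem (hf : f ∈ trigPolynomialLE n) : Continuous f := by
  obtain ⟨F, -, hF⟩ := hf
  have h : ∀ θ, f θ = (F.eval (exp (θ * I)) / exp (θ * I) ^ n).re := fun θ => by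
    rw [hF, mul_div_cancel_left₀ _ (pow_ne_zero _ (Complex.exp_ne_zero _)), ofReal_re]
  rw [funext h]
  refine continuous_re.comp (Continuous.div (by fun_prop) (by fun_prop)
    fun θ => pow_ne_zero _ (Complex.exp_ne_zero _))

theorem eq_zero_of_two_mul_lt_card {ι : Type*} [Fintype ι] (hf : f ∈ trigPolynomialLE n)
    (hcard : 2 * n < Fintype.card ι) {ζ : ι → ℝ} (hζ : Function.Injective ζ) {a : ℝ}
    (hmem : ∀ i, ζ i ∈ Ico a (a + 2 * π)) (hzero : ∀ i, f (ζ i) = 0) : f = 0 := by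
  obtain ⟨F, hFdeg, hF⟩ := hf
  have hinj : Function.Injective fun i => exp (ζ i * I) := fun i j hij =>
    hζ (Circle.exp_injOn_Ico (by linarith) (hmem i) (hmem j) (Circle.ext hij))
  have hF0 : F = 0 := eq_zero_of_natDegree_lt_card_of_eval_eq_zero F hinj
    (fun i => by simp [hF, hzero]) (by omega)
  ext θ
  simpa [hF0, Complex.exp_ne_zero] using (hF θ).symm

end trigPolynomialLE

end

/-- The points `θ₀ + (k * π - s) / n`, at which `cos (n * (θ - θ₀) + s) = (-1) ^ k`, with `θ₀` and
`θ₁` inserted between the first two of them. -/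
noncomputable def alternationPoints (n : ℕ) (s θ₀ θ₁ : ℝ) : ℕ → ℝ
  | 0 => θ₀ - s / n
  | 1 => θ₀
  | 2 => θ₁
  | j + 3 => θ₀ + ((j + 1) * π - s) / n

section alternationPoints

variable {n : ℕ} {s θ₀ θ₁ : ℝ}

theorem alternationPoints_strictMono (hn : 0 < n) (hs : 0 < s) (h₀₁ : θ₀ < θ₁)
    (h₁ : θ₁ < θ₀ + (π - s) / n) : StrictMono (alternationPoints n s θ₀ θ₁) := by
  have hn' : (0 : ℝ) < n := by exact_mod_cast hn
  refine strictMono_nat_of_lt_succ ?_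
  rintro (_ | _ | _ | j) <;> simp only [alternationPoints]
  · linarith [div_pos hs hn']
  · exact h₀₁
  · simpa using h₁
  · gcongr
    linarith [pi_pos]

theorem alternationPoints_le_add_two_pi (hn : 0 < n) :
    alternationPoints n s θ₀ θ₁ (2 * n + 1) ≤ alternationPoints n s θ₀ θ₁ 0 + 2 * π := by
  obtain ⟨k, rfl⟩ := Nat.exists_eq_add_of_lt hn
  simp only [show 2 * (0 + k + 1) + 1 = 2 * k + 3 by omega, alternationPoints]
  rw [← sub_nonneg]
  have : θ₀ - s / ↑(0 + k + 1) + 2 * π - (θ₀ + ((↑(2 * k) + 1) * π - s) / ↑(0 + k + 1)) =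
      π / (k + 1) := by
    push_cast
    field_simp
    ring
  rw [this]
  positivity

theorem neg_one_pow_mul_alternationPoints_pos {f : ℝ → ℝ} {M c : ℝ} (hn : 0 < n)
    (hf : ∀ θ, |f θ| ≤ M) (hf₀ : f θ₀ = M) (hf₁ : f θ₁ < M * (1 / 2 - s))
    (hs : 0 < s) (hs' : s < 1 / 2) (hMc : M < c) (hc : c * cos s < M)
    (h₀₁ : θ₀ ≤ θ₁) (h₁ : θ₁ ≤ θ₀ + π / (3 * n)) (j : ℕ) :
    0 < (-1) ^ j * (c * cos (n * alternationPoints n s θ₀ θ₁ j + (s - n * θ₀)) -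
      f (alternationPoints n s θ₀ θ₁ j)) := by
  have hn' : (0 : ℝ) < n := by exact_mod_cast hn
  have hq (k : ℕ) : 0 < (-1) ^ k * (c * cos (n * (θ₀ + (k * π - s) / n) + (s - n * θ₀)) -
      f (θ₀ + (k * π - s) / n)) := by
    have harg : n * (θ₀ + (k * π - s) / n) + (s - n * θ₀) = k * π := by field_simp; ring
    obtain ⟨hlo, hhi⟩ := abs_le.mp (hf (θ₀ + (k * π - s) / n))
    rw [harg, cos_nat_mul_pi]
    rcases neg_one_pow_eq_or ℝ k with h | h <;> rw [h] <;> linarith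
  rcases j with _ | _ | _ | j
  · simpa [alternationPoints, sub_eq_add_neg, neg_div] using hq 0
  · have harg : n * θ₀ + (s - n * θ₀) = s := by ring
    simpa [alternationPoints, harg, hf₀] using hc
  · have ht : n * (θ₁ - θ₀) ≤ π / 3 := by
      have := (le_div_iff₀ (by positivity)).mp (sub_le_iff_le_add'.mpr h₁)
      linarith
    have hcos_t : 1 / 2 ≤ cos (n * (θ₁ - θ₀)) := cos_pi_div_three ▸
      cos_le_cos_of_nonneg_of_le_pi (by nlinarith) (by linarith [pi_pos]) ht
    have hlip := (abs_le.mp (abs_cos_sub_cos_le (n * θ₁ + (s - n * θ₀)) (n * (θ₁ - θ₀)))).1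
    rw [show n * θ₁ + (s - n * θ₀) - n * (θ₁ - θ₀) = s by ring, abs_of_pos hs] at hlip
    have hM : 0 ≤ M := (abs_nonneg _).trans (hf θ₀)
    have h1 : c * (1 / 2 - s) ≤ c * cos (n * θ₁ + (s - n * θ₀)) :=
      mul_le_mul_of_nonneg_left (by linarith) (by linarith)
    have h2 : M * (1 / 2 - s) ≤ c * (1 / 2 - s) := mul_le_mul_of_nonneg_right hMc.le (by linarith)
    norm_num [alternationPoints]
    linarith
  · have hpow : (-1 : ℝ) ^ (j + 3) = (-1) ^ (j + 1) := by
      rw [pow_add, pow_add (-1 : ℝ) j 1]; norm_num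
    simpa [alternationPoints, hpow] using hq (j + 1)

end alternationPoints

namespace trigPolynomialLE

variable {n : ℕ} {f : ℝ → ℝ} {θ₀ θ₁ : ℝ}

theorem not_alternating {G : ℝ → ℝ} (hG : G ∈ trigPolynomialLE n) {p : ℕ → ℝ}
    (hp : StrictMono p) (hperiod : p (2 * n + 1) ≤ p 0 + 2 * π)
    (hsign : ∀ j ≤ 2 * n + 1, 0 < (-1) ^ j * G (p j)) : False := by
  obtain ⟨ζ, hζ, hζ0⟩ := exists_strictMono_zeros_of_alternating (continuous_of_mem hG) hp hsign
  have hG0 : G = 0 := eq_zero_of_two_mul_lt_card hG (by simp) hζ.injective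
    (fun i => ⟨(hζ0 i).1.1.le, (hζ0 i).1.2.trans_le hperiod⟩) (fun i => (hζ0 i).2)
  simpa [hG0] using hsign 0 (Nat.zero_le _)

theorem half_le_of_mem_Icc (hf : f ∈ trigPolynomialLE n) (hmax : ∀ θ, |f θ| ≤ f θ₀)
    (h : θ₁ ∈ Icc θ₀ (θ₀ + π / (3 * n))) : f θ₀ / 2 ≤ f θ₁ := by
  obtain ⟨h₀₁, h₁⟩ := h
  rcases h₀₁.eq_or_lt with rfl | hlt
  · linarith [(abs_nonneg _).trans (hmax θ₀)]
  have hn : 0 < n := Nat.pos_of_ne_zero fun h0 => by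
    simp only [h0, CharP.cast_eq_zero, mul_zero, div_zero, add_zero] at h₁
    linarith
  set M := f θ₀
  by_contra! hlow
  have hM : 0 < M := by linarith [neg_abs_le (f θ₁), hmax θ₁]
  set s := (M / 2 - f θ₁) / (4 * M)
  have hs : 0 < s := div_pos (by linarith) (by positivity)
  have hs' : s < 1 / 2 := by
    rw [div_lt_iff₀ (by positivity)]; linarith [neg_abs_le (f θ₁), hmax θ₁]
  have hf₁ : f θ₁ < M * (1 / 2 - s) := by
    have : M * s = (M / 2 - f θ₁) / 4 := by simp only [s]; field_simp
    rw [mul_sub, this]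
    linarith
  have hcos : 0 < cos s := cos_pos_of_mem_Ioo ⟨by linarith [pi_pos], by linarith [pi_gt_three]⟩
  have hcos' : cos s < 1 := by
    simpa using cos_lt_cos_of_nonneg_of_le_pi le_rfl (by linarith [pi_gt_three]) hs
  -- `M < c` puts the comparison cosine above `|f|` at its peaks, `c * cos s < M` below `f θ₀`.
  obtain ⟨c, hMc, hc⟩ := exists_between ((lt_div_iff₀ hcos).mpr (mul_lt_of_lt_one_right hM hcos'))
  have hG : c • (fun θ => cos (n * θ + (s - n * θ₀))) - f ∈ trigPolynomialLE n :=
    sub_mem (Submodule.smul_mem _ c (cos_nat_mul_add_mem _)) hf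
  refine not_alternating hG (alternationPoints_strictMono hn hs hlt ?_)
    (alternationPoints_le_add_two_pi hn) fun j _ => ?_
  · calc θ₁ ≤ θ₀ + π / 3 / n := by rwa [div_div]
      _ < θ₀ + (π - s) / n := by gcongr; linarith [pi_gt_three]
  · exact neg_one_pow_mul_alternationPoints_pos hn hmax rfl hf₁ hs hs' hMc
      ((lt_div_iff₀ hcos).mp hc) h₀₁ h₁ j

theorem half_le_of_abs_sub_le (hf : f ∈ trigPolynomialLE n) (hmax : ∀ θ, |f θ| ≤ f θ₀)
    (h : |θ₁ - θ₀| ≤ π / (3 * n)) : f θ₀ / 2 ≤ f θ₁ := by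
  obtain ⟨h₁, h₂⟩ := abs_le.mp h
  rcases le_total θ₀ θ₁ with h₀₁ | h₁₀
  · exact half_le_of_mem_Icc hf hmax ⟨h₀₁, by linarith⟩
  · simpa using half_le_of_mem_Icc (comp_neg_mem hf) (θ₀ := -θ₀) (θ₁ := -θ₁)
      (by simpa using fun θ => hmax (-θ)) ⟨by linarith, by linarith⟩

theorem abs_half_le_of_abs_sub_le (hf : f ∈ trigPolynomialLE n) (hmax : ∀ θ, |f θ| ≤ |f θ₀|)
    (h : |θ₁ - θ₀| ≤ π / (3 * n)) : |f θ₀| / 2 ≤ |f θ₁| := by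
  rcases abs_cases (f θ₀) with ⟨h₀, -⟩ | ⟨h₀, -⟩
  · rw [h₀] at hmax ⊢
    exact (half_le_of_abs_sub_le hf hmax h).trans (le_abs_self _)
  · rw [h₀] at hmax ⊢
    exact (half_le_of_abs_sub_le (f := -f) (neg_mem hf) (by simpa using hmax) h).trans
      (neg_le_abs _)

end trigPolynomialLE

theorem add_mul_cos_mem_Icc {a b : ℝ} (hab : a ≤ b) (θ : ℝ) :
    (a + b) / 2 + (b - a) / 2 * cos θ ∈ Icc a b := by
  constructor <;> nlinarith [neg_one_le_cos θ, cos_le_one θ]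

theorem one_sub_cos_le_cos_sub_cos {α u : ℝ} (hα : 0 ≤ α) (hu : 0 ≤ u) (h : α + u ≤ π) :
    1 - cos u ≤ cos α - cos (α + u) := by
  obtain ⟨a, rfl⟩ : ∃ a, α = 2 * a := ⟨α / 2, by ring⟩
  obtain ⟨b, rfl⟩ : ∃ b, u = 2 * b := ⟨u / 2, by ring⟩
  have hdiff : cos (2 * a) - cos (2 * a + 2 * b) - (1 - cos (2 * b)) =
      4 * sin a * sin b * cos (a + b) := by
    rw [show 2 * a + 2 * b = 2 * (a + b) by ring]
    simp only [cos_two_mul, cos_add]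
    linear_combination 2 * sin b ^ 2 * sin_sq_add_cos_sq a +
      (2 - 2 * cos a ^ 2) * sin_sq_add_cos_sq b
  have hpi := pi_pos
  have : 0 ≤ 4 * sin a * sin b * cos (a + b) := by
    have ha := sin_nonneg_of_nonneg_of_le_pi (x := a) (by linarith) (by linarith)
    have hb := sin_nonneg_of_nonneg_of_le_pi (x := b) (by linarith) (by linarith)
    have hab := cos_nonneg_of_mem_Icc (x := a + b) ⟨by linarith, by linarith⟩
    positivity
  linarith

theorem one_div_two_mul_sq_le_one_sub_cos (n : ℕ) :
    1 / (2 * (n : ℝ) ^ 2) ≤ 1 - cos (π / (3 * n)) := by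
  rcases n with _ | _ | n
  · simp
  · norm_num [cos_pi_div_three]
  set x := π / (3 * ↑(n + 2))
  have hxn : x * (n + 2) = π / 3 := by simp only [x]; push_cast; field_simp
  have hx0 : 0 < x := by positivity
  have hx1 : x ≤ π / 6 := by
    rw [div_le_div_iff₀ (by positivity) (by norm_num)]; push_cast; nlinarith [pi_pos]
  have hb := (abs_le.mp (cos_bound (x := x) (by rw [abs_of_pos hx0]; linarith [pi_lt_d2]))).2
  rw [abs_of_pos hx0] at hb
  have hx2 : x ^ 2 ≤ π ^ 2 / 36 := by nlinarith
  have hπ2 : 9.8596 ≤ π ^ 2 := by nlinarith [pi_gt_d2]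
  have hπ2' : π ^ 2 ≤ 9.9225 := by nlinarith [pi_lt_d2, pi_pos]
  rw [div_le_iff₀ (by positivity)]
  calc 1 ≤ π ^ 2 / 9 * (1 - 5 * x ^ 2 / 48) := by
        nlinarith [mul_le_mul_of_nonneg_left hx2 (sq_nonneg π),
          mul_le_mul_of_nonneg_left hπ2' (sq_nonneg π)]
    _ = (x ^ 2 / 2 - x ^ 4 * (5 / 96)) * (2 * ↑(n + 2) ^ 2) := by
      rw [show π ^ 2 / 9 = (x * (n + 2)) ^ 2 by rw [hxn]; ring]; push_cast; ring
    _ ≤ (1 - cos x) * (2 * ↑(n + 2) ^ 2) :=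
      mul_le_mul_of_nonneg_right (by linarith) (by positivity)

theorem exists_arc_one_div_two_mul_sq_le_cos_sub_cos (n : ℕ) {θ₀ : ℝ} (hθ₀ : θ₀ ∈ Icc 0 π) :
    ∃ α, θ₀ ∈ Icc α (α + π / (3 * n)) ∧
      1 / (2 * (n : ℝ) ^ 2) ≤ cos α - cos (α + π / (3 * n)) := by
  set u := π / (3 * n)
  have hu₀ : 0 ≤ u := by positivity
  have hu : u ≤ π := by
    rcases n.eq_zero_or_pos with rfl | hn
    · simp [u, pi_pos.le]
    · exact div_le_self pi_pos.le (by norm_cast; omega)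
  refine ⟨min θ₀ (π - u), ⟨min_le_left _ _, ?_⟩, (one_div_two_mul_sq_le_one_sub_cos n).trans
    (one_sub_cos_le_cos_sub_cos (le_min hθ₀.1 (by linarith)) hu₀
      (by linarith [min_le_right θ₀ (π - u)]))⟩
  rcases min_cases θ₀ (π - u) with h | h <;> linarith [h.1, hθ₀.2]

theorem polynomial_large_on_subinterval_general (n : ℕ) (P : Polynomial ℝ)
    (hP : P.natDegree ≤ n) (a b : ℝ) (hab : a < b) (M : ℝ)
    (hM : IsGreatest ((fun x => |P.eval x|) '' Icc a b) M) :
    ∃ c d : ℝ, a ≤ c ∧ c ≤ d ∧ d ≤ b ∧ (b - a) / (4 * (n : ℝ) ^ 2) ≤ d - c ∧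
      ∀ x ∈ Icc c d, M / 2 ≤ |P.eval x| := by
  obtain ⟨⟨x₀, hx₀, rfl⟩, hmax⟩ := hM
  set g : ℝ → ℝ := fun θ => (a + b) / 2 + (b - a) / 2 * cos θ
  have hg : Continuous g := by fun_prop
  have hg_mem : ∀ θ, g θ ∈ Icc a b := add_mul_cos_mem_Icc hab.le
  obtain ⟨θ₀, hθ₀, rfl⟩ : x₀ ∈ g '' Icc 0 π :=
    intermediate_value_Icc' pi_pos.le hg.continuousOn (by
      rwa [show g π = a by simp [g]; ring, show g 0 = b by simp [g]; ring])
  obtain ⟨α, hθ₀α, hdrop⟩ := exists_arc_one_div_two_mul_sq_le_cos_sub_cos n hθ₀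
  have hlen : (b - a) / (4 * (n : ℝ) ^ 2) ≤ g α - g (α + π / (3 * n)) := calc
    (b - a) / (4 * (n : ℝ) ^ 2) = (b - a) / 2 * (1 / (2 * (n : ℝ) ^ 2)) := by ring
    _ ≤ (b - a) / 2 * (cos α - cos (α + π / (3 * n))) :=
      mul_le_mul_of_nonneg_left hdrop (by linarith)
    _ = g α - g (α + π / (3 * n)) := by simp only [g]; ring
  have hlen₀ : 0 ≤ (b - a) / (4 * (n : ℝ) ^ 2) := div_nonneg (by linarith) (by positivity)
  refine ⟨g (α + π / (3 * n)), g α, (hg_mem _).1, by linarith, (hg_mem _).2, hlen, fun x hx => ?_⟩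
  obtain ⟨θ, hθ, rfl⟩ := intermediate_value_Icc' (by linarith [hθ₀α.1, hθ₀α.2]) hg.continuousOn hx
  exact trigPolynomialLE.abs_half_le_of_abs_sub_le (trigPolynomialLE.eval_add_mul_cos_mem hP _ _)
    (fun θ => hmax ⟨_, hg_mem θ, rfl⟩)
    (abs_sub_le_iff.mpr ⟨by linarith [hθ.2, hθ₀α.1], by linarith [hθ.1, hθ₀α.2]⟩)

/-- Lemma 2.9: if `P` is a real polynomial of degree at most `n ≥ 1` and
`M = max_{[a,b]} |P|`, then there is a closed subinterval of `[a,b]` of length at least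
`(b-a)/(4n²)` on which `|P| ≥ M/2`. -/
theorem polynomial_large_on_subinterval (n : ℕ) (hn : 1 ≤ n) (P : Polynomial ℝ)
    (hP : P.natDegree ≤ n) (a b : ℝ) (hab : a < b) (M : ℝ)
    (hM : IsGreatest ((fun x => |P.eval x|) '' Icc a b) M) :
    ∃ c d : ℝ, a ≤ c ∧ c ≤ d ∧ d ≤ b ∧ (b - a) / (4 * (n : ℝ) ^ 2) ≤ d - c ∧
      ∀ x ∈ Icc c d, M / 2 ≤ |P.eval x| :=
  polynomial_large_on_subinterval_general n P hP a b hab M hM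
end

section
/- Let m ≥ 1, let a < b, and let f, g: [a,b] → ℝ be C^m functions with f(a) = g(a) = 0. Let Tf and Tg denote the Taylor polynomials of order m of f and g at a, i.e. Tf(x) = Σ_{k=0}^m D^k f(a)(x−a)^k/k! and similarly for Tg. Suppose ε > 0 is such that on [a,b]: |f − Tf| ≤ ε(b−a)^m, |g − Tg| ≤ ε(b−a)^m, |f' − (Tf)'| ≤ ε(b−a)^{m−1}, and |g' − (Tg)'| ≤ ε(b−a)^{m−1}. Then |∫_a^b (f'g − g'f) − ∫_a^b ((Tf)'·Tg − Tf·(Tg)')| ≤ 2ε²(b−a)^{2m} + (1 + 8m²)·ε·(b−a)^m ∫_a^b (|(Tf)'| + |(Tg)'|). -/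
open Set MeasureTheory intervalIntegral

private lemma taylor_fun_contDiff (n : ℕ) (a : ℝ) (c : ℕ → ℝ) :
    ContDiff ℝ (⊤ : ℕ∞) (fun x : ℝ => ∑ k ∈ Finset.range n, c k * (x - a) ^ k / (Nat.factorial k : ℝ)) := by
  apply ContDiff.sum
  intro k _
  exact (contDiff_const.mul ((contDiff_id.sub contDiff_const).pow k)).div_const _

private lemma abs_le_integral_abs_deriv {T : ℝ → ℝ} (hT : ContDiff ℝ (⊤ : ℕ∞) T) {a b x : ℝ}
    (hx : x ∈ Icc a b) (hTa : T a = 0) :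
    |T x| ≤ ∫ t in a..b, |deriv T t| := by
  have hd : Continuous (deriv T) := hT.continuous_deriv (mod_cast le_top)
  have hftc : T x = ∫ t in a..x, deriv T t := by
    rw [intervalIntegral.integral_deriv_eq_sub
      (fun t _ => (hT.differentiable (by simp)).differentiableAt)
      (hd.intervalIntegrable a x), hTa, sub_zero]
  rw [hftc]
  calc |∫ t in a..x, deriv T t| ≤ ∫ t in a..x, |deriv T t| :=
        intervalIntegral.abs_integral_le_integral_abs hx.1
    _ ≤ ∫ t in a..b, |deriv T t| := by
        apply intervalIntegral.integral_mono_interval le_rfl hx.1 hx.2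
        · exact Filter.Eventually.of_forall fun t => abs_nonneg _
        · exact (hd.abs).intervalIntegrable a b

/-- key estimate in the proof of necessity: the enclosed-area integral of a
pair of `C^m` functions `(f,g)` vanishing at `a` is compared with the enclosed-area integral of
their Taylor polynomials `(Tf, Tg)` of order `m` at `a`. -/
theorem area_integral_taylor_estimate (m : ℕ) (hm : 1 ≤ m) (a b : ℝ) (hab : a < b)
    (f g : ℝ → ℝ)
    (hf : ContDiffOn ℝ (m : ℕ∞) f (Icc a b)) (hg : ContDiffOn ℝ (m : ℕ∞) g (Icc a b))
    (hfa : f a = 0) (hga : g a = 0)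
    (Tf Tg : ℝ → ℝ)
    (hTf : ∀ x, Tf x = ∑ k ∈ Finset.range (m + 1),
      iteratedDerivWithin k f (Icc a b) a * (x - a) ^ k / (Nat.factorial k : ℝ))
    (hTg : ∀ x, Tg x = ∑ k ∈ Finset.range (m + 1),
      iteratedDerivWithin k g (Icc a b) a * (x - a) ^ k / (Nat.factorial k : ℝ))
    (ε : ℝ) (hε : 0 < ε)
    (h1 : ∀ x ∈ Icc a b, |f x - Tf x| ≤ ε * (b - a) ^ m)
    (h2 : ∀ x ∈ Icc a b, |g x - Tg x| ≤ ε * (b - a) ^ m)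
    (h3 : ∀ x ∈ Icc a b, |derivWithin f (Icc a b) x - deriv Tf x| ≤ ε * (b - a) ^ (m - 1))
    (h4 : ∀ x ∈ Icc a b, |derivWithin g (Icc a b) x - deriv Tg x| ≤ ε * (b - a) ^ (m - 1)) :
    |(∫ x in a..b, (derivWithin f (Icc a b) x * g x - derivWithin g (Icc a b) x * f x)) -
        ∫ x in a..b, (deriv Tf x * Tg x - Tf x * deriv Tg x)| ≤
      2 * ε ^ 2 * (b - a) ^ (2 * m) +
        (1 + 8 * (m : ℝ) ^ 2) * ε * (b - a) ^ m *
          ∫ x in a..b, (|deriv Tf x| + |deriv Tg x|) := by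
  obtain ⟨m', rfl⟩ : ∃ m', m = m' + 1 := ⟨m - 1, (Nat.succ_pred_eq_of_pos hm).symm⟩
  set m := m' + 1 with hmdef
  have hba : (0 : ℝ) < b - a := sub_pos.mpr hab
  have hm1 : (m : ℕ∞) ≥ 1 := by exact_mod_cast hm
  -- smoothness of the Taylor polynomials
  have hTfc : ContDiff ℝ (⊤ : ℕ∞) Tf := by
    rw [show Tf = _ from funext hTf]; exact taylor_fun_contDiff _ _ _
  have hTgc : ContDiff ℝ (⊤ : ℕ∞) Tg := by
    rw [show Tg = _ from funext hTg]; exact taylor_fun_contDiff _ _ _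
  have cTf : Continuous Tf := hTfc.continuous
  have cTg : Continuous Tg := hTgc.continuous
  have cTf' : Continuous (deriv Tf) := hTfc.continuous_deriv (mod_cast le_top)
  have cTg' : Continuous (deriv Tg) := hTgc.continuous_deriv (mod_cast le_top)
  -- values at a
  have hTfa : Tf a = 0 := by
    rw [hTf a]
    apply Finset.sum_eq_zero
    intro k _
    rcases Nat.eq_zero_or_pos k with h0 | h0
    · subst h0; simp [hfa]
    · simp [sub_self, zero_pow h0.ne']
  have hTga : Tg a = 0 := by
    rw [hTg a]
    apply Finset.sum_eq_zero
    intro k _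
    rcases Nat.eq_zero_or_pos k with h0 | h0
    · subst h0; simp [hga]
    · simp [sub_self, zero_pow h0.ne']
  set Mf : ℝ := ∫ t in a..b, |deriv Tf t| with hMf
  set Mg : ℝ := ∫ t in a..b, |deriv Tg t| with hMg
  have hMf0 : 0 ≤ Mf := intervalIntegral.integral_nonneg hab.le fun t _ => abs_nonneg _
  have hMg0 : 0 ≤ Mg := intervalIntegral.integral_nonneg hab.le fun t _ => abs_nonneg _
  have hTfbd : ∀ x ∈ Icc a b, |Tf x| ≤ Mf := fun x hx => abs_le_integral_abs_deriv hTfc hx hTfa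
  have hTgbd : ∀ x ∈ Icc a b, |Tg x| ≤ Mg := fun x hx => abs_le_integral_abs_deriv hTgc hx hTga
  -- continuity of the various pieces on [a,b]
  have cf : ContinuousOn f (Icc a b) := hf.continuousOn
  have cg : ContinuousOn g (Icc a b) := hg.continuousOn
  have cf' : ContinuousOn (derivWithin f (Icc a b)) (Icc a b) :=
    hf.continuousOn_derivWithin (uniqueDiffOn_Icc hab) (by exact_mod_cast hm)
  have cg' : ContinuousOn (derivWithin g (Icc a b)) (Icc a b) :=
    hg.continuousOn_derivWithin (uniqueDiffOn_Icc hab) (by exact_mod_cast hm)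
  have huIcc : uIcc a b = Icc a b := uIcc_of_le hab.le
  -- the difference of integrands
  set D : ℝ → ℝ := fun x =>
    (derivWithin f (Icc a b) x * g x - derivWithin g (Icc a b) x * f x) -
      (deriv Tf x * Tg x - Tf x * deriv Tg x) with hD
  have cD : ContinuousOn D (Icc a b) := by
    apply ContinuousOn.sub
    · exact (cf'.mul cg).sub (cg'.mul cf)
    · exact ((cTf'.continuousOn.mul cTg.continuousOn).sub
        (cTf.continuousOn.mul cTg'.continuousOn))
  have hintD : IntervalIntegrable D volume a b := by
    apply ContinuousOn.intervalIntegrable; rwa [huIcc]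
  have hint1 : IntervalIntegrable
      (fun x => derivWithin f (Icc a b) x * g x - derivWithin g (Icc a b) x * f x) volume a b := by
    apply ContinuousOn.intervalIntegrable; rw [huIcc]; exact (cf'.mul cg).sub (cg'.mul cf)
  have hint2 : IntervalIntegrable (fun x => deriv Tf x * Tg x - Tf x * deriv Tg x) volume a b :=
    ((cTf'.mul cTg).sub (cTf.mul cTg')).intervalIntegrable a b
  have hsplit :
      (∫ x in a..b, (derivWithin f (Icc a b) x * g x - derivWithin g (Icc a b) x * f x)) -
        (∫ x in a..b, (deriv Tf x * Tg x - Tf x * deriv Tg x)) = ∫ x in a..b, D x :=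
    (intervalIntegral.integral_sub hint1 hint2).symm
  -- the pointwise bound
  set bound : ℝ → ℝ := fun x =>
    2 * (ε * (b - a) ^ (m - 1)) * (ε * (b - a) ^ m) + ε * (b - a) ^ (m - 1) * (Mf + Mg) +
      (|deriv Tf x| + |deriv Tg x|) * (ε * (b - a) ^ m) with hbound
  have hεd1 : (0:ℝ) ≤ ε * (b - a) ^ (m - 1) := mul_nonneg hε.le (pow_nonneg hba.le _)
  have hεd : (0:ℝ) ≤ ε * (b - a) ^ m := mul_nonneg hε.le (pow_nonneg hba.le _)
  have hptwise : ∀ x ∈ Icc a b, |D x| ≤ bound x := by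
    intro x hx
    set p := derivWithin f (Icc a b) x - deriv Tf x with hp
    set q := g x - Tg x with hq
    set r := derivWithin g (Icc a b) x - deriv Tg x with hr
    set s := f x - Tf x with hs
    have hid : D x = (p * q + p * Tg x + deriv Tf x * q) -
        (r * s + r * Tf x + deriv Tg x * s) := by
      simp only [hD, hp, hq, hr, hs]; ring
    have tri : |D x| ≤ |p| * |q| + |p| * |Tg x| + |deriv Tf x| * |q| +
        (|r| * |s| + |r| * |Tf x| + |deriv Tg x| * |s|) := by
      rw [hid]
      calc |(p * q + p * Tg x + deriv Tf x * q) - (r * s + r * Tf x + deriv Tg x * s)|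
          ≤ |p * q + p * Tg x + deriv Tf x * q| + |r * s + r * Tf x + deriv Tg x * s| :=
            abs_sub _ _
        _ ≤ (|p * q| + |p * Tg x| + |deriv Tf x * q|) +
              (|r * s| + |r * Tf x| + |deriv Tg x * s|) := by
            gcongr <;>
              exact (abs_add_le _ _).trans (add_le_add_left (abs_add_le _ _) _)
        _ = |p| * |q| + |p| * |Tg x| + |deriv Tf x| * |q| +
              (|r| * |s| + |r| * |Tf x| + |deriv Tg x| * |s|) := by
            simp [abs_mul]
    have b1 : |p| * |q| ≤ (ε * (b - a) ^ (m - 1)) * (ε * (b - a) ^ m) :=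
      mul_le_mul (h3 x hx) (h2 x hx) (abs_nonneg _) hεd1
    have b2 : |p| * |Tg x| ≤ (ε * (b - a) ^ (m - 1)) * Mg :=
      mul_le_mul (h3 x hx) (hTgbd x hx) (abs_nonneg _) hεd1
    have b3 : |deriv Tf x| * |q| ≤ |deriv Tf x| * (ε * (b - a) ^ m) :=
      mul_le_mul_of_nonneg_left (h2 x hx) (abs_nonneg _)
    have b4 : |r| * |s| ≤ (ε * (b - a) ^ (m - 1)) * (ε * (b - a) ^ m) :=
      mul_le_mul (h4 x hx) (h1 x hx) (abs_nonneg _) hεd1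
    have b5 : |r| * |Tf x| ≤ (ε * (b - a) ^ (m - 1)) * Mf :=
      mul_le_mul (h4 x hx) (hTfbd x hx) (abs_nonneg _) hεd1
    have b6 : |deriv Tg x| * |s| ≤ |deriv Tg x| * (ε * (b - a) ^ m) :=
      mul_le_mul_of_nonneg_left (h1 x hx) (abs_nonneg _)
    have : bound x = (ε * (b - a) ^ (m - 1)) * (ε * (b - a) ^ m) +
        (ε * (b - a) ^ (m - 1)) * Mg + |deriv Tf x| * (ε * (b - a) ^ m) +
        ((ε * (b - a) ^ (m - 1)) * (ε * (b - a) ^ m) + (ε * (b - a) ^ (m - 1)) * Mf +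
          |deriv Tg x| * (ε * (b - a) ^ m)) := by
      simp only [hbound]; ring
    rw [this]
    linarith [tri, b1, b2, b3, b4, b5, b6]
  have hintbound : IntervalIntegrable bound volume a b := by
    apply Continuous.intervalIntegrable
    exact continuous_const.add (((cTf'.abs.add cTg'.abs).mul continuous_const))
  -- integrate the bound
  have habs : IntervalIntegrable (fun x => |D x|) volume a b := hintD.abs
  have key : |∫ x in a..b, D x| ≤ ∫ x in a..b, bound x := by
    calc |∫ x in a..b, D x| ≤ ∫ x in a..b, |D x| :=
          intervalIntegral.abs_integral_le_integral_abs hab.le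
      _ ≤ ∫ x in a..b, bound x :=
          intervalIntegral.integral_mono_on hab.le habs hintbound hptwise
  have hintabssum : IntervalIntegrable (fun x => |deriv Tf x| + |deriv Tg x|) volume a b :=
    (cTf'.abs.add cTg'.abs).intervalIntegrable a b
  have hboundval : (∫ x in a..b, bound x) =
      (2 * (ε * (b - a) ^ (m - 1)) * (ε * (b - a) ^ m) + ε * (b - a) ^ (m - 1) * (Mf + Mg))
        * (b - a) +
      (∫ x in a..b, (|deriv Tf x| + |deriv Tg x|)) * (ε * (b - a) ^ m) := by
    simp only [hbound]
    rw [intervalIntegral.integral_add (intervalIntegrable_const)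
      (hintabssum.mul_const _), intervalIntegral.integral_const,
      intervalIntegral.integral_mul_const]
    simp [smul_eq_mul]; ring
  have hIsum : (∫ x in a..b, (|deriv Tf x| + |deriv Tg x|)) = Mf + Mg := by
    rw [intervalIntegral.integral_add (cTf'.abs.intervalIntegrable a b)
      (cTg'.abs.intervalIntegrable a b)]
  rw [hsplit]
  refine key.trans ?_
  rw [hboundval, hIsum]
  -- now pure algebra / arithmetic
  have hmm : m - 1 = m' := rfl
  have hpow1 : (b - a) ^ (m - 1) * (b - a) = (b - a) ^ m := by
    rw [hmm, hmdef, pow_succ]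
  have hpow2 : (b - a) ^ (2 * m) = ((b - a) ^ m) ^ 2 := by rw [← pow_mul, mul_comm]
  have hcast : (1:ℝ) ≤ (m:ℝ) := by exact_mod_cast hm
  have hεdpos : (0:ℝ) < ε * (b - a) ^ m := mul_pos hε (pow_pos hba _)
  have e1 : (2 * (ε * (b - a) ^ (m - 1)) * (ε * (b - a) ^ m) +
      ε * (b - a) ^ (m - 1) * (Mf + Mg)) * (b - a) =
      2 * ε ^ 2 * (b - a) ^ (2 * m) + ε * (b - a) ^ m * (Mf + Mg) := by
    rw [hpow2]
    have : (2 * (ε * (b - a) ^ (m - 1)) * (ε * (b - a) ^ m) +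
        ε * (b - a) ^ (m - 1) * (Mf + Mg)) * (b - a) =
        2 * ε * ((b - a) ^ (m - 1) * (b - a)) * (ε * (b - a) ^ m) +
        ε * ((b - a) ^ (m - 1) * (b - a)) * (Mf + Mg) := by ring
    rw [this, hpow1]; ring
  rw [e1]
  have h8 : ε * (b - a) ^ m * (Mf + Mg) + (Mf + Mg) * (ε * (b - a) ^ m) ≤
      (1 + 8 * (m : ℝ) ^ 2) * ε * (b - a) ^ m * (Mf + Mg) := by
    have hMsum : (0:ℝ) ≤ Mf + Mg := add_nonneg hMf0 hMg0
    have key2 : (2:ℝ) ≤ 1 + 8 * (m:ℝ) ^ 2 := by nlinarith [hcast]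
    nlinarith [mul_le_mul_of_nonneg_right key2 (mul_nonneg hεdpos.le hMsum)]
  linarith [h8]
end

section
/- Let m ≥ 1 and D > 0. There exists a constant C ≥ 1, depending only on m and D, with the following property. Let a < b with b − a ≤ D, let f, g: [a,b] → ℝ be C^m with f(a) = g(a) = 0, let Tf and Tg be the Taylor polynomials of order m of f and g at a, and let 0 < α < 1/C. Suppose that |f' − (Tf)'| ≤ α(b−a)^{m−1} and |g' − (Tg)'| ≤ α(b−a)^{m−1} on [a,b], that (b−a)^m > max(∫_a^b |(Tf)'|, ∫_a^b |(Tg)'|), and that 𝒜 ∈ ℝ satisfies |𝒜| ≤ 3α(b−a)^{2m}. Then there exist C^∞ functions φ, ψ: [a,b] → ℝ such that: (1) D^i ψ(a) = D^i ψ(b) = D^i φ(a) = D^i φ(b) = 0 for 0 ≤ i ≤ m; (2) max(|D^i ψ(x)|, |D^i φ(x)|) ≤ C·√α for all x ∈ [a,b] and 0 ≤ i ≤ m; (3) 4∫_a^b (ψ f' + φ g' + ψ φ') = 𝒜. -/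
/-!
Fix a smooth bump `β` supported in `[1/4, 3/4]`, put `ℓ = (b - a) / 3`, and look for
`ψ = r ∑ₖ wₖ β'((x - a)/ℓ - k)` and `φ = ε r ∑ₖ wₖ β((x - a)/ℓ - k)` (`k < 3`, `ε` the sign
of `𝒜`, `w ∈ ℝ³` a unit vector). These vanish to all orders at `a` and `b`, and
`∫ ψ f'`, `∫ φ g'` are linear in `w`; since `ℝ³` has a unit vector orthogonal to any two
vectors, both can be made to vanish. The bumps have disjoint supports and
`φ' = ε r ℓ⁻¹ ∑ₖ wₖ β'(…)`, so `∫ ψ φ' = ε r² ∫ β'²`, and `r² = |𝒜| / (4 ∫ β'²)` gives the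
value `𝒜`. Finally `|𝒜| ≤ 3α(b - a)^{2m}` makes `r ≲ √α (b - a)^m`, which absorbs the factor
`ℓ⁻ⁱ` in the `i`-th derivative for `i ≤ m`.
-/

open Set MeasureTheory intervalIntegral
open Function Filter Topology Matrix
open scoped ContDiff

theorem Matrix.exists_mulVec_eq_zero_dotProduct_self_eq_one {ι κ : Type*} [Fintype ι]
    [Fintype κ] (P : Matrix ι κ ℝ) (h : Fintype.card ι < Fintype.card κ) :
    ∃ w, P *ᵥ w = 0 ∧ w ⬝ᵥ w = 1 := by
  obtain ⟨v, hv, hv0⟩ := Submodule.exists_mem_ne_zero_of_ne_bot <|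
    P.mulVecLin.ker_ne_bot_of_finrank_lt <| by simpa [Module.finrank_fintype_fun_eq_card]
  have hpos : 0 < v ⬝ᵥ v := lt_of_le_of_ne (Finset.sum_nonneg fun k _ => mul_self_nonneg (v k))
    (Ne.symm (mt dotProduct_self_eq_zero.mp hv0))
  refine ⟨(√(v ⬝ᵥ v))⁻¹ • v, ?_, ?_⟩
  · rw [mulVec_smul, ← mulVecLin_apply, LinearMap.mem_ker.mp hv, smul_zero]
  · rw [smul_dotProduct, dotProduct_smul, smul_smul, smul_eq_mul, ← sq, inv_pow,
      Real.sq_sqrt hpos.le, inv_mul_cancel₀ hpos.ne']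

theorem abs_le_one_of_dotProduct_self_eq_one {ι : Type*} [Fintype ι] {w : ι → ℝ}
    (hw : w ⬝ᵥ w = 1) (k : ι) : |w k| ≤ 1 :=
  abs_le_one_iff_mul_self_le_one.mpr
    (hw ▸ Finset.single_le_sum (fun j _ => mul_self_nonneg (w j)) (Finset.mem_univ k))

theorem HasCompactSupport.exists_bound_iteratedDeriv {F : ℝ → ℝ} (hF : ContDiff ℝ ∞ F)
    (hc : HasCompactSupport F) (N : ℕ) : ∃ K, ∀ j ≤ N, ∀ y, |iteratedDeriv j F y| ≤ K := by
  have hcj : ∀ j, HasCompactSupport (iteratedDeriv j F) := fun j => by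
    induction j with
    | zero => simpa using hc
    | succ j ih => rw [iteratedDeriv_succ]; exact ih.deriv
  choose K hK using fun j =>
    (hF.continuous_iteratedDeriv j (by exact_mod_cast le_top)).bounded_above_of_compact_support
      (hcj j)
  refine ⟨∑ j ∈ Finset.range (N + 1), |K j|, fun j hj y => (hK j y).trans ?_⟩
  exact (le_abs_self _).trans (Finset.single_le_sum (f := fun j => |K j|)
    (fun _ _ => abs_nonneg _) (Finset.mem_range.mpr (by omega)))

noncomputable def unitBump : ContDiffBump (1 / 2 : ℝ) := ⟨1 / 8, 1 / 4, by norm_num, by norm_num⟩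

theorem tsupport_unitBump : tsupport unitBump = Icc (1 / 4) (3 / 4) := by
  rw [unitBump.tsupport_eq, Real.closedBall_eq_Icc, show unitBump.rOut = 1 / 4 from rfl]
  norm_num

theorem integral_deriv_unitBump_mul_self_pos :
    0 < ∫ y, deriv unitBump y * deriv unitBump y := by
  obtain ⟨x, hx⟩ : ∃ x, deriv unitBump x ≠ 0 := by
    by_contra! h
    have h₁ : unitBump (1 / 2) = 1 := unitBump.one_of_mem_closedBall (by simp [unitBump])
    have h₀ : unitBump 0 = 0 := unitBump.zero_of_le_dist (by norm_num [unitBump])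
    have := is_const_of_deriv_eq_zero
      ((unitBump.contDiff (n := 1)).differentiable (by simp)) h 0 (1 / 2)
    linarith
  have hc : Continuous (deriv unitBump) := unitBump.contDiff.continuous_deriv (le_refl 1)
  exact (hc.mul hc).integral_pos_of_hasCompactSupport_nonneg_nonzero
    unitBump.hasCompactSupport.deriv.mul_left (fun y => mul_self_nonneg _) (mul_self_ne_zero.mpr hx)

/-- When `support F ⊆ [1/4, 3/4]`, the `k`-th term lives in `[a + (k + 1/4)ℓ, a + (k + 3/4)ℓ]`:
the terms have disjoint supports inside `[a, a + nℓ]`. -/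
noncomputable def bumpTrain (F : ℝ → ℝ) (a ℓ : ℝ) {n : ℕ} (w : Fin n → ℝ) (x : ℝ) : ℝ :=
  ∑ k, w k * F ((x - a) / ℓ - k)

section BumpTrain

variable {F G : ℝ → ℝ} {a ℓ : ℝ} {n : ℕ}

theorem contDiff_bumpTrain (hF : ContDiff ℝ ∞ F) (w : Fin n → ℝ) :
    ContDiff ℝ ∞ (bumpTrain F a ℓ w) := by
  unfold bumpTrain
  fun_prop

theorem continuous_bumpTrain (hF : Continuous F) (w : Fin n → ℝ) :
    Continuous (bumpTrain F a ℓ w) := by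
  unfold bumpTrain
  fun_prop

theorem hasDerivAt_bumpTrain (hF : Differentiable ℝ F) (w : Fin n → ℝ) (x : ℝ) :
    HasDerivAt (bumpTrain F a ℓ w) (bumpTrain (deriv F) a ℓ (ℓ⁻¹ • w) x) x := by
  refine (HasDerivAt.fun_sum (u := Finset.univ) fun (k : Fin n) _ => ((hF _).hasDerivAt.comp x
    ((((hasDerivAt_id x).sub_const a).div_const ℓ).sub_const ((k : ℕ) : ℝ))).const_mul
    (w k)).congr_deriv (Finset.sum_congr rfl fun k _ => ?_)
  simp only [Pi.smul_apply, smul_eq_mul, id]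
  ring

theorem deriv_bumpTrain (hF : Differentiable ℝ F) (w : Fin n → ℝ) :
    deriv (bumpTrain F a ℓ w) = bumpTrain (deriv F) a ℓ (ℓ⁻¹ • w) :=
  funext fun x => (hasDerivAt_bumpTrain hF w x).deriv

theorem iteratedDeriv_bumpTrain (hF : ContDiff ℝ ∞ F) (i : ℕ) (w : Fin n → ℝ) :
    iteratedDeriv i (bumpTrain F a ℓ w) = bumpTrain (iteratedDeriv i F) a ℓ (ℓ⁻¹ ^ i • w) := by
  induction i generalizing F w with
  | zero => simp
  | succ i ih =>
    rw [iteratedDeriv_succ', deriv_bumpTrain (hF.differentiable (by simp)),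
      ih (contDiff_infty_iff_deriv.mp hF).2, ← iteratedDeriv_succ', smul_smul, pow_succ]

theorem abs_bumpTrain_le {K c : ℝ} (hF : ∀ y, |F y| ≤ K) {w : Fin n → ℝ}
    (hw : ∀ k, |w k| ≤ c) (x : ℝ) : |bumpTrain F a ℓ w x| ≤ n * (c * K) := by
  calc |bumpTrain F a ℓ w x| ≤ ∑ k, |w k * F ((x - a) / ℓ - k)| := Finset.abs_sum_le_sum_abs _ _
    _ ≤ ∑ _k : Fin n, c * K := Finset.sum_le_sum fun k _ => by
        rw [abs_mul]; exact mul_le_mul (hw k) (hF _) (abs_nonneg _) ((abs_nonneg _).trans (hw k))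
    _ = n * (c * K) := by simp

theorem abs_iteratedDeriv_bumpTrain_le {K c : ℝ} {i : ℕ} (hF : ContDiff ℝ ∞ F)
    (hK : ∀ y, |iteratedDeriv i F y| ≤ K) (hℓ : 0 < ℓ) {w : Fin n → ℝ}
    (hw : ∀ k, |w k| ≤ c) (x : ℝ) :
    |iteratedDeriv i (bumpTrain F a ℓ w) x| ≤ n * (ℓ⁻¹ ^ i * c * K) := by
  rw [iteratedDeriv_bumpTrain hF]
  refine (abs_bumpTrain_le hK (c := ℓ⁻¹ ^ i * c) (fun k => ?_) x).trans_eq (by ring)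
  rw [Pi.smul_apply, smul_eq_mul, abs_mul, abs_of_pos (by positivity)]
  exact mul_le_mul_of_nonneg_left (hw k) (by positivity)

theorem bumpTrain_eventuallyEq_zero_left (hF : support F ⊆ Icc (1 / 4) (3 / 4)) (hℓ : 0 < ℓ)
    (w : Fin n → ℝ) : bumpTrain F a ℓ w =ᶠ[𝓝 a] 0 := by
  filter_upwards [Iio_mem_nhds (show a < a + ℓ / 4 by linarith)] with x hx
  refine Finset.sum_eq_zero fun k _ => mul_eq_zero_of_right _ (notMem_support.mp fun h => ?_)
  have := (hF h).1
  rw [le_sub_iff_add_le, le_div_iff₀ hℓ] at this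
  nlinarith [(k : ℕ).cast_nonneg (α := ℝ), mem_Iio.mp hx]

theorem bumpTrain_eventuallyEq_zero_right (hF : support F ⊆ Icc (1 / 4) (3 / 4)) (hℓ : 0 < ℓ)
    (w : Fin n → ℝ) : bumpTrain F a ℓ w =ᶠ[𝓝 (a + n * ℓ)] 0 := by
  filter_upwards [Ioi_mem_nhds (show a + n * ℓ - ℓ / 4 < a + n * ℓ by linarith)] with x hx
  refine Finset.sum_eq_zero fun k _ => mul_eq_zero_of_right _ (notMem_support.mp fun h => ?_)
  have := (hF h).2
  have hk : ((k : ℕ) : ℝ) + 1 ≤ n := by exact_mod_cast k.isLt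
  rw [sub_le_iff_le_add, div_le_iff₀ hℓ] at this
  nlinarith [mem_Ioi.mp hx]

theorem iteratedDeriv_bumpTrain_left (hF : support F ⊆ Icc (1 / 4) (3 / 4)) (hℓ : 0 < ℓ)
    (w : Fin n → ℝ) (i : ℕ) : iteratedDeriv i (bumpTrain F a ℓ w) a = 0 := by
  rw [((bumpTrain_eventuallyEq_zero_left hF hℓ w).iteratedDeriv i).eq_of_nhds]
  simp [Pi.zero_def]

theorem iteratedDeriv_bumpTrain_right (hF : support F ⊆ Icc (1 / 4) (3 / 4)) (hℓ : 0 < ℓ)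
    (w : Fin n → ℝ) (i : ℕ) : iteratedDeriv i (bumpTrain F a ℓ w) (a + n * ℓ) = 0 := by
  rw [((bumpTrain_eventuallyEq_zero_right hF hℓ w).iteratedDeriv i).eq_of_nhds]
  simp [Pi.zero_def]

theorem mul_comp_sub_natCast_eq_zero (hF : support F ⊆ Icc (1 / 4) (3 / 4))
    (hG : support G ⊆ Icc (1 / 4) (3 / 4)) {j k : ℕ} (hjk : j ≠ k) (y : ℝ) :
    F (y - j) * G (y - k) = 0 := by
  by_contra h
  obtain ⟨hj₁, hj₂⟩ := hF (left_ne_zero_of_mul h)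
  obtain ⟨hk₁, hk₂⟩ := hG (right_ne_zero_of_mul h)
  rcases hjk.lt_or_gt with hlt | hlt
  · have : (j : ℝ) + 1 ≤ k := by exact_mod_cast hlt
    linarith
  · have : (k : ℝ) + 1 ≤ j := by exact_mod_cast hlt
    linarith

theorem bumpTrain_mul_bumpTrain (hF : support F ⊆ Icc (1 / 4) (3 / 4))
    (hG : support G ⊆ Icc (1 / 4) (3 / 4)) (w v : Fin n → ℝ) (x : ℝ) :
    bumpTrain F a ℓ w x * bumpTrain G a ℓ v x =
      ∑ k, w k * v k * (F ((x - a) / ℓ - k) * G ((x - a) / ℓ - k)) := by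
  rw [bumpTrain, bumpTrain, Finset.sum_mul_sum]
  refine Finset.sum_congr rfl fun j _ => ?_
  rw [Finset.sum_eq_single j (fun k _ hkj => ?_) (by simp)]
  · ring
  · rw [mul_mul_mul_comm, mul_comp_sub_natCast_eq_zero hF hG (Fin.val_ne_of_ne hkj.symm), mul_zero]

theorem integral_comp_div_sub_natCast {H : ℝ → ℝ} (hH : support H ⊆ Icc (1 / 4) (3 / 4))
    (hℓ : 0 < ℓ) {k : ℕ} (hk : k < n) :
    ∫ x in a..a + n * ℓ, H ((x - a) / ℓ - k) = ℓ * ∫ y, H y := by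
  have hk' : (k : ℝ) + 1 ≤ n := by exact_mod_cast hk
  simp_rw [show ∀ x, (x - a) / ℓ - k = x / ℓ - (a / ℓ + k) from fun x => by ring]
  rw [intervalIntegral.integral_comp_div_sub H hℓ.ne', smul_eq_mul, add_div,
    mul_div_cancel_right₀ _ hℓ.ne', integral_eq_integral_of_support_subset]
  exact hH.trans fun y hy => ⟨by linarith [hy.1], by linarith [hy.2]⟩

theorem integral_bumpTrain_mul {u : ℝ → ℝ} {s t : ℝ} (hF : Continuous F)
    (hu : IntervalIntegrable u volume s t) (w : Fin n → ℝ) :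
    ∫ x in s..t, bumpTrain F a ℓ w x * u x =
      w ⬝ᵥ fun k => ∫ x in s..t, F ((x - a) / ℓ - k) * u x := by
  simp_rw [bumpTrain, Finset.sum_mul, mul_assoc]
  rw [intervalIntegral.integral_finsetSum fun k _ =>
    (hu.continuousOn_mul (by fun_prop)).const_mul _]
  simp_rw [intervalIntegral.integral_const_mul]
  rfl

theorem integral_bumpTrain_mul_bumpTrain (hF : support F ⊆ Icc (1 / 4) (3 / 4))
    (hG : support G ⊆ Icc (1 / 4) (3 / 4)) (hFc : Continuous F) (hGc : Continuous G)
    (hℓ : 0 < ℓ) (w v : Fin n → ℝ) :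
    ∫ x in a..a + n * ℓ, bumpTrain F a ℓ w x * bumpTrain G a ℓ v x =
      ℓ * (w ⬝ᵥ v) * ∫ y, F y * G y := by
  simp_rw [bumpTrain_mul_bumpTrain hF hG]
  rw [intervalIntegral.integral_finsetSum fun k _ =>
    (Continuous.intervalIntegrable (by fun_prop) _ _).const_mul _]
  simp_rw [intervalIntegral.integral_const_mul]
  rw [Finset.sum_congr rfl fun k _ => by
    rw [integral_comp_div_sub_natCast ((support_mul_subset_left F G).trans hF) hℓ k.isLt]]
  simp only [dotProduct, Finset.sum_mul, Finset.mul_sum]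
  exact Finset.sum_congr rfl fun k _ => by ring

theorem integral_bumpTrain_perturbation (hF : ContDiff ℝ ∞ F)
    (hsupp : tsupport F ⊆ Icc (1 / 4) (3 / 4)) (hℓ : 0 < ℓ) {u v : ℝ → ℝ}
    (hu : IntervalIntegrable u volume a (a + n * ℓ))
    (hv : IntervalIntegrable v volume a (a + n * ℓ)) {w : Fin n → ℝ}
    (hwu : w ⬝ᵥ (fun k => ∫ x in a..a + n * ℓ, deriv F ((x - a) / ℓ - k) * u x) = 0)
    (hwv : w ⬝ᵥ (fun k => ∫ x in a..a + n * ℓ, F ((x - a) / ℓ - k) * v x) = 0) (s t : ℝ) :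
    ∫ x in a..a + n * ℓ, (bumpTrain (deriv F) a ℓ (s • w) x * u x +
      bumpTrain F a ℓ (t • w) x * v x +
      bumpTrain (deriv F) a ℓ (s • w) x * deriv (bumpTrain F a ℓ (t • w)) x) =
      s * t * (w ⬝ᵥ w) * ∫ y, deriv F y * deriv F y := by
  have hF' : Continuous (deriv F) := hF.continuous_deriv (by simp)
  have hsupp' : support (deriv F) ⊆ Icc (1 / 4) (3 / 4) := support_deriv_subset.trans hsupp
  have hψ := continuous_bumpTrain hF' (a := a) (ℓ := ℓ) (s • w)
  have hφ := continuous_bumpTrain hF.continuous (a := a) (ℓ := ℓ) (t • w)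
  rw [deriv_bumpTrain (hF.differentiable (by simp)),
    intervalIntegral.integral_add ((hu.continuousOn_mul hψ.continuousOn).add
      (hv.continuousOn_mul hφ.continuousOn))
      ((hψ.fun_mul (continuous_bumpTrain hF' _)).intervalIntegrable _ _),
    intervalIntegral.integral_add (hu.continuousOn_mul hψ.continuousOn)
      (hv.continuousOn_mul hφ.continuousOn),
    integral_bumpTrain_mul hF' hu, integral_bumpTrain_mul hF.continuous hv,
    integral_bumpTrain_mul_bumpTrain hsupp' hsupp' hF' hF' hℓ, smul_dotProduct, hwu,
    smul_dotProduct, hwv, smul_dotProduct, dotProduct_smul, dotProduct_smul]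
  simp only [smul_eq_mul]
  field_simp
  ring

theorem exists_bumpTrain_perturbation (hF : ContDiff ℝ ∞ F)
    (hsupp : tsupport F ⊆ Icc (1 / 4) (3 / 4)) (hM : 0 < ∫ y, deriv F y * deriv F y)
    (hℓ : 0 < ℓ) (hn : 2 < n) {u v : ℝ → ℝ}
    (hu : IntervalIntegrable u volume a (a + n * ℓ))
    (hv : IntervalIntegrable v volume a (a + n * ℓ)) (A : ℝ) :
    ∃ φ ψ : ℝ → ℝ, ContDiff ℝ ∞ φ ∧ ContDiff ℝ ∞ ψ ∧
      (∀ i, iteratedDeriv i ψ a = 0 ∧ iteratedDeriv i ψ (a + n * ℓ) = 0 ∧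
        iteratedDeriv i φ a = 0 ∧ iteratedDeriv i φ (a + n * ℓ) = 0) ∧
      (∀ i K, (∀ y, |iteratedDeriv i F y| ≤ K) → (∀ y, |iteratedDeriv (i + 1) F y| ≤ K) →
        ∀ x, max |iteratedDeriv i ψ x| |iteratedDeriv i φ x| ≤
          n * (ℓ⁻¹ ^ i * √(|A| / (4 * ∫ y, deriv F y * deriv F y)) * K)) ∧
      4 * ∫ x in a..a + n * ℓ, (ψ x * u x + φ x * v x + ψ x * deriv φ x) = A := by
  set M := ∫ y, deriv F y * deriv F y
  have hF' : ContDiff ℝ ∞ (deriv F) := (contDiff_infty_iff_deriv.mp hF).2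
  have hsupp' : support (deriv F) ⊆ Icc (1 / 4) (3 / 4) := support_deriv_subset.trans hsupp
  have hsuppF : support F ⊆ Icc (1 / 4) (3 / 4) := (subset_tsupport F).trans hsupp
  obtain ⟨w, hw, hww⟩ := Matrix.exists_mulVec_eq_zero_dotProduct_self_eq_one (Matrix.of ![
    fun k : Fin n => ∫ x in a..a + n * ℓ, deriv F ((x - a) / ℓ - k) * u x,
    fun k : Fin n => ∫ x in a..a + n * ℓ, F ((x - a) / ℓ - k) * v x]) (by simpa using hn)
  have hsmul (c : ℝ) (k : Fin n) : |(c • w) k| ≤ |c| := by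
    rw [Pi.smul_apply, smul_eq_mul, abs_mul]
    exact mul_le_of_le_one_right (abs_nonneg c) (abs_le_one_of_dotProduct_self_eq_one hww k)
  set r := √(|A| / (4 * M))
  have hr : 0 ≤ r := Real.sqrt_nonneg _
  set ε : ℝ := (SignType.sign A : ℝ)
  have hε : |ε| ≤ 1 := by rcases lt_trichotomy A 0 with h | h | h <;> simp [ε, h]
  refine ⟨bumpTrain F a ℓ ((ε * r) • w), bumpTrain (deriv F) a ℓ (r • w),
    contDiff_bumpTrain hF _, contDiff_bumpTrain hF' _,
    fun i => ⟨iteratedDeriv_bumpTrain_left hsupp' hℓ _ i,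
      iteratedDeriv_bumpTrain_right hsupp' hℓ _ i, iteratedDeriv_bumpTrain_left hsuppF hℓ _ i,
      iteratedDeriv_bumpTrain_right hsuppF hℓ _ i⟩,
    fun i K hK hK' x => max_le ?_ ?_, ?_⟩
  · refine abs_iteratedDeriv_bumpTrain_le hF' (fun y => ?_) hℓ
      (fun k => (hsmul r k).trans_eq (abs_of_nonneg hr)) x
    rw [← iteratedDeriv_succ']
    exact hK' y
  · refine abs_iteratedDeriv_bumpTrain_le hF hK hℓ (fun k => (hsmul _ k).trans ?_) x
    rw [abs_mul, abs_of_nonneg hr]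
    exact mul_le_of_le_one_left hr hε
  · have hwu := congrFun hw 0
    have hwv := congrFun hw 1
    simp only [mulVec, of_apply, Matrix.cons_val_zero, Matrix.cons_val_one, dotProduct_comm _ w,
      Pi.zero_apply] at hwu hwv
    rw [integral_bumpTrain_perturbation hF hsupp hℓ hu hv hwu hwv, hww,
      show 4 * (r * (ε * r) * 1 * M) = ε * (4 * M * (r * r)) by ring,
      Real.mul_self_sqrt (by positivity), mul_div_cancel₀ _ (by positivity)]
    exact sign_mul_abs A

end BumpTrain

theorem sqrt_abs_div_le {A c d α h : ℝ} {m : ℕ} (hd : 0 < d) (hα : 0 ≤ α) (hh : 0 ≤ h)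
    (hA : |A| ≤ c * α * h ^ (2 * m)) : √(|A| / d) ≤ √α * h ^ m * √(c / d) := by
  rw [← Real.sqrt_sq (pow_nonneg hh m), ← Real.sqrt_mul hα, ← Real.sqrt_mul (by positivity)]
  refine Real.sqrt_le_sqrt ?_
  calc |A| / d ≤ c * α * h ^ (2 * m) / d := by gcongr
    _ = _ := by ring

theorem inv_pow_mul_mul_pow_le {c ℓ D : ℝ} (hc : 1 ≤ c) (hℓ : 0 < ℓ) (hD : c * ℓ ≤ D)
    {i m : ℕ} (hi : i ≤ m) : ℓ⁻¹ ^ i * (c * ℓ) ^ m ≤ (c * max 1 D) ^ m := by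
  have hℓD : ℓ ≤ max 1 D := by nlinarith [le_max_right 1 D]
  calc ℓ⁻¹ ^ i * (c * ℓ) ^ m = c ^ m * ℓ ^ (m - i) := by
        rw [mul_pow, ← Nat.sub_add_cancel hi, pow_add ℓ, Nat.sub_add_cancel hi, inv_pow]
        field_simp
    _ ≤ c ^ m * max 1 D ^ m := by
        gcongr
        exact (pow_le_pow_left₀ hℓ.le hℓD _).trans (pow_le_pow_right₀ (le_max_left _ _) (by omega))
    _ = (c * max 1 D) ^ m := (mul_pow _ _ _).symm

theorem perturbation_small_derivative_case_general (m : ℕ) (hm : 1 ≤ m) (D : ℝ) :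
    ∃ C : ℝ, 1 ≤ C ∧
      ∀ (a b : ℝ), a < b → b - a ≤ D →
      ∀ (f g : ℝ → ℝ),
        ContDiffOn ℝ (m : ℕ∞) f (Icc a b) → ContDiffOn ℝ (m : ℕ∞) g (Icc a b) →
        f a = 0 → g a = 0 →
      ∀ (Tf Tg : ℝ → ℝ),
        (∀ x, Tf x = ∑ k ∈ Finset.range (m + 1),
          iteratedDerivWithin k f (Icc a b) a * (x - a) ^ k / (Nat.factorial k : ℝ)) →
        (∀ x, Tg x = ∑ k ∈ Finset.range (m + 1),
          iteratedDerivWithin k g (Icc a b) a * (x - a) ^ k / (Nat.factorial k : ℝ)) →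
      ∀ α : ℝ, 0 < α → α < 1 / C →
        (∀ x ∈ Icc a b, |derivWithin f (Icc a b) x - deriv Tf x| ≤ α * (b - a) ^ (m - 1)) →
        (∀ x ∈ Icc a b, |derivWithin g (Icc a b) x - deriv Tg x| ≤ α * (b - a) ^ (m - 1)) →
        max (∫ x in a..b, |deriv Tf x|) (∫ x in a..b, |deriv Tg x|) < (b - a) ^ m →
      ∀ A : ℝ, |A| ≤ 3 * α * (b - a) ^ (2 * m) →
      ∃ φ ψ : ℝ → ℝ, ContDiff ℝ (⊤ : ℕ∞) φ ∧ ContDiff ℝ (⊤ : ℕ∞) ψ ∧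
        (∀ i ≤ m, iteratedDeriv i ψ a = 0 ∧ iteratedDeriv i ψ b = 0 ∧
          iteratedDeriv i φ a = 0 ∧ iteratedDeriv i φ b = 0) ∧
        (∀ i ≤ m, ∀ x ∈ Icc a b,
          max |iteratedDeriv i ψ x| |iteratedDeriv i φ x| ≤ C * Real.sqrt α) ∧
        4 * (∫ x in a..b, (ψ x * derivWithin f (Icc a b) x + φ x * derivWithin g (Icc a b) x +
          ψ x * deriv φ x)) = A := by
  set M := ∫ y, deriv unitBump y * deriv unitBump y
  have hM : 0 < M := integral_deriv_unitBump_mul_self_pos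
  obtain ⟨K, hK⟩ :=
    unitBump.hasCompactSupport.exists_bound_iteratedDeriv unitBump.contDiff (m + 1)
  refine ⟨max 1 (3 * K * √(3 / (4 * M)) * (3 * max 1 D) ^ m), le_max_left _ _, ?_⟩
  intro a b hab hbD f g hf hg _ _ Tf Tg _ _ α hα _ _ _ _ A hA
  obtain ⟨ℓ, hℓ, rfl⟩ : ∃ ℓ, 0 < ℓ ∧ b = a + (3 : ℕ) * ℓ :=
    ⟨(b - a) / 3, by linarith, by push_cast; ring⟩
  have hu := (hf.continuousOn_derivWithin (uniqueDiffOn_Icc hab) (by exact_mod_cast hm)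
    ).intervalIntegrable_of_Icc (μ := volume) hab.le
  have hv := (hg.continuousOn_derivWithin (uniqueDiffOn_Icc hab) (by exact_mod_cast hm)
    ).intervalIntegrable_of_Icc (μ := volume) hab.le
  obtain ⟨φ, ψ, hφ, hψ, hends, hbound, hint⟩ := exists_bumpTrain_perturbation unitBump.contDiff
    tsupport_unitBump.subset hM hℓ (by norm_num) hu hv A
  refine ⟨φ, ψ, hφ, hψ, fun i _ => hends i, fun i hi x _ =>
    (hbound i K (hK i (by omega)) (hK (i + 1) (by omega)) x).trans ?_, hint⟩
  have hK0 : 0 ≤ K := (abs_nonneg _).trans (hK 0 (by omega) 0)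
  calc ((3 : ℕ) : ℝ) * (ℓ⁻¹ ^ i * √(|A| / (4 * M)) * K)
      ≤ 3 * (ℓ⁻¹ ^ i * (√α * (3 * ℓ) ^ m * √(3 / (4 * M))) * K) := by
        push_cast
        gcongr
        exact sqrt_abs_div_le (by linarith) hα.le (by positivity) (by simpa using hA)
    _ = 3 * K * √(3 / (4 * M)) * (ℓ⁻¹ ^ i * (3 * ℓ) ^ m) * √α := by ring
    _ ≤ 3 * K * √(3 / (4 * M)) * (3 * max 1 D) ^ m * √α := by
        gcongr
        exact inv_pow_mul_mul_pow_le (by norm_num) hℓ (by push_cast at hbD; linarith) hi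
    _ ≤ _ := by gcongr; exact le_max_right _ _

/-- Lemma 6.6: construction of the perturbations `φ, ψ` in the case where
both Taylor polynomials `Tf, Tg` have small average derivative. -/
theorem perturbation_small_derivative_case (m : ℕ) (hm : 1 ≤ m) (D : ℝ) (hD : 0 < D) :
    ∃ C : ℝ, 1 ≤ C ∧
      ∀ (a b : ℝ), a < b → b - a ≤ D →
      ∀ (f g : ℝ → ℝ),
        ContDiffOn ℝ (m : ℕ∞) f (Icc a b) → ContDiffOn ℝ (m : ℕ∞) g (Icc a b) →
        f a = 0 → g a = 0 →
      ∀ (Tf Tg : ℝ → ℝ),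
        (∀ x, Tf x = ∑ k ∈ Finset.range (m + 1),
          iteratedDerivWithin k f (Icc a b) a * (x - a) ^ k / (Nat.factorial k : ℝ)) →
        (∀ x, Tg x = ∑ k ∈ Finset.range (m + 1),
          iteratedDerivWithin k g (Icc a b) a * (x - a) ^ k / (Nat.factorial k : ℝ)) →
      ∀ α : ℝ, 0 < α → α < 1 / C →
        (∀ x ∈ Icc a b, |derivWithin f (Icc a b) x - deriv Tf x| ≤ α * (b - a) ^ (m - 1)) →
        (∀ x ∈ Icc a b, |derivWithin g (Icc a b) x - deriv Tg x| ≤ α * (b - a) ^ (m - 1)) →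
        max (∫ x in a..b, |deriv Tf x|) (∫ x in a..b, |deriv Tg x|) < (b - a) ^ m →
      ∀ A : ℝ, |A| ≤ 3 * α * (b - a) ^ (2 * m) →
      ∃ φ ψ : ℝ → ℝ, ContDiff ℝ (⊤ : ℕ∞) φ ∧ ContDiff ℝ (⊤ : ℕ∞) ψ ∧
        (∀ i ≤ m, iteratedDeriv i ψ a = 0 ∧ iteratedDeriv i ψ b = 0 ∧
          iteratedDeriv i φ a = 0 ∧ iteratedDeriv i φ b = 0) ∧
        (∀ i ≤ m, ∀ x ∈ Icc a b,
          max |iteratedDeriv i ψ x| |iteratedDeriv i φ x| ≤ C * Real.sqrt α) ∧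
        4 * (∫ x in a..b, (ψ x * derivWithin f (Icc a b) x + φ x * derivWithin g (Icc a b) x +
          ψ x * deriv φ x)) = A :=
  perturbation_small_derivative_case_general m hm D
end

section
/- Let K ⊂ ℝ be compact, m ≥ 1, I = [min K, max K], and write I ∖ K = ∪_{i≥1} (a_i, b_i) as a disjoint union of open intervals with a_i, b_i ∈ K. Let F, G, H be Whitney fields of class C^m on K satisfying condition (★), and let β be a modulus of continuity. Suppose for each i ≥ 1 that (𝓕_i, 𝓖_i, 𝓗_i): [a_i, b_i] → ℝ³ is a C^m curve with 𝓗_i' = 2(𝓕_i'𝓖_i − 𝓖_i'𝓕_i) on [a_i,b_i] such that: D^k 𝓕_i, D^k 𝓖_i, D^k 𝓗_i agree with F^k, G^k, H^k respectively at both endpoints a_i and b_i for 0 ≤ k ≤ m; and |D^k 𝓕_i(x) − F^k(a_i)| ≤ 2β(b_i − a_i), |D^k 𝓖_i(x) − G^k(a_i)| ≤ 2β(b_i − a_i) for all x ∈ [a_i, b_i] and 0 ≤ k ≤ m. Define Γ = (𝓕, 𝓖, 𝓗): I → ℝ³ by Γ(x) = (F(x), G(x), H(x)) for x ∈ K and Γ(x)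 = (𝓕_i(x), 𝓖_i(x), 𝓗_i(x)) for x ∈ (a_i, b_i). Then Γ is a C^m curve on I (with one-sided derivatives at the endpoints of I), Γ is horizontal, i.e. 𝓗' = 2(𝓕'𝓖 − 𝓖'𝓕) on I, and D^k 𝓕(x) = F^k(x), D^k 𝓖(x) = G^k(x), D^k 𝓗(x) = H^k(x) for all x ∈ K and 0 ≤ k ≤ m. -/
open Set MeasureTheory intervalIntegral

/-- A modulus of continuity: an increasing function `[0,∞) → [0,∞)` with `β(0) = 0` and
`β(t) → 0` as `t ↘ 0`. -/
def IsModulus (β : ℝ → ℝ) : Prop :=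
  (∀ t, 0 ≤ β t) ∧ MonotoneOn β (Ici 0) ∧ β 0 = 0 ∧
    Filter.Tendsto β (nhdsWithin 0 (Ioi 0)) (nhds 0)

/-!
The candidate derivatives of the glued curve are the glued jets: `P k` on `K` and the derivatives
of the gap curves on the gaps. Near a point `x ∈ K` the derivative of the `k`-th glued jet is
checked separately on `K` (the Whitney condition), on the finitely many long gaps (the gap curve
is `C^m` up to its endpoints, where its jet is `P`), and on the short gaps, where the derivatives
of the curve are uniformly close to the jet, so that the mean value inequality from the endpoint
between `x` and `t` applies. Long gaps are finite in number because the gap lengths are summable.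
For the third coordinate this closeness follows from the Leibniz rule for `h' = 2 (f' g - g' f)`
together with (★), and horizontality is the case `k = 1` of the glued jets.
-/

open Filter Topology

theorem eventually_forall_dist_le {α : Type*} [PseudoMetricSpace α] {x : α} {p : α → Prop}
    (h : ∀ᶠ y in 𝓝 x, p y) : ∀ᶠ t in 𝓝 x, ∀ y, dist y x ≤ dist t x → p y := by
  obtain ⟨δ, hδ, hball⟩ := Metric.eventually_nhds_iff.1 h
  exact Metric.eventually_nhds_iff.2 ⟨δ, hδ, fun {t} ht y hy => hball (hy.trans_lt ht)⟩

theorem eventually_nhdsWithin_of_subset_union_iUnion {α ι : Type*} [TopologicalSpace α]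
    {x : α} {p : α → Prop} {s K : Set α} {U : ι → Set α} (hs : s ⊆ K ∪ ⋃ i, U i)
    {S : Set ι} (hS : S.Finite) (hK : ∀ᶠ t in 𝓝[K] x, p t)
    (hU : ∀ i ∈ S, ∀ᶠ t in 𝓝[U i] x, p t) (hrest : ∀ᶠ t in 𝓝 x, ∀ i ∉ S, t ∈ U i → p t) :
    ∀ᶠ t in 𝓝[s] x, p t := by
  have hcover : s ⊆ (K ∪ ⋃ i ∈ S, U i) ∪ {t | ∃ i ∉ S, t ∈ U i} := by
    intro t ht
    rcases hs ht with htK | htU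
    · exact Or.inl (Or.inl htK)
    · obtain ⟨i, hi⟩ := mem_iUnion.1 htU
      by_cases hiS : i ∈ S
      · exact Or.inl (Or.inr (mem_biUnion hiS hi))
      · exact Or.inr ⟨i, hiS, hi⟩
  refine nhdsWithin_mono x hcover ?_
  rw [nhdsWithin_union, nhdsWithin_union, nhdsWithin_biUnion hS]
  refine ⟨⟨hK, eventually_iSup.2 fun i => eventually_iSup.2 (hU i)⟩, ?_⟩
  filter_upwards [nhdsWithin_le_nhds hrest, self_mem_nhdsWithin] with t ht ⟨i, hiS, hti⟩
  exact ht i hiS hti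

theorem hasDerivWithinAt_iff_eventually_abs_le {f : ℝ → ℝ} {f' x : ℝ} {s : Set ℝ} :
    HasDerivWithinAt f f' s x ↔
      ∀ ε > 0, ∀ᶠ t in 𝓝[s] x, |f t - f x - f' * (t - x)| ≤ ε * |t - x| := by
  simp only [hasDerivWithinAt_iff_isLittleO, Asymptotics.isLittleO_iff, Real.norm_eq_abs,
    smul_eq_mul, mul_comm _ f']

theorem iteratedDerivWithin_eqOn_of_hasDerivWithinAt {s : Set ℝ} (hs : UniqueDiffOn ℝ s)
    {m : ℕ} {p : ℕ → ℝ → ℝ} (hp : ∀ k < m, ∀ x ∈ s, HasDerivWithinAt (p k) (p (k + 1) x) s x) :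
    ∀ k ≤ m, EqOn (iteratedDerivWithin k (p 0) s) (p k) s := by
  intro k hk
  induction k with
  | zero => exact fun x _ => by rw [iteratedDerivWithin_zero]
  | succ k ih =>
    intro x hx
    rw [iteratedDerivWithin_succ, derivWithin_congr (ih (by omega)) (ih (by omega) hx)]
    exact (hp k (by omega) x hx).derivWithin (hs x hx)

theorem contDiffOn_of_hasDerivWithinAt {s : Set ℝ} (hs : UniqueDiffOn ℝ s)
    {m : ℕ} {p : ℕ → ℝ → ℝ} (hp : ∀ k < m, ∀ x ∈ s, HasDerivWithinAt (p k) (p (k + 1) x) s x)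
    (hcont : ContinuousOn (p m) s) : ContDiffOn ℝ (m : ℕ∞) (p 0) s := by
  have heq := iteratedDerivWithin_eqOn_of_hasDerivWithinAt hs hp
  refine contDiffOn_of_continuousOn_differentiableOn_deriv (fun k hk => ?_) (fun k hk => ?_)
  · have hk : k ≤ m := by exact_mod_cast hk
    refine ContinuousOn.congr ?_ (heq k hk)
    rcases hk.lt_or_eq with hk | rfl
    · exact fun x hx => (hp k hk x hx).continuousWithinAt
    · exact hcont
  · have hk : k < m := by exact_mod_cast hk
    exact fun x hx => ((hp k hk x hx).differentiableWithinAt).congr (heq k hk.le) (heq k hk.le hx)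

theorem TP_self (n : ℕ) (F : ℕ → ℝ → ℝ) (a : ℝ) : TP n F a a = F 0 a := by
  simp [TP, Finset.sum_range_succ']

theorem hasDerivAt_TP_self {n : ℕ} (hn : 1 ≤ n) (F : ℕ → ℝ → ℝ) (a : ℝ) :
    HasDerivAt (TP n F a) (F 1 a) a := by
  unfold TP
  refine (HasDerivAt.fun_sum fun l _ =>
    ((((hasDerivAt_id' a).sub_const a).pow l).const_mul (F l a)).div_const
      (l.factorial : ℝ)).congr_deriv ?_
  rw [Finset.sum_eq_single 1]
  · simp
  · intro l _ hl
    rcases l with _ | l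
    · simp
    · simp [show l ≠ 0 by omega]
  · simp; omega


theorem IsWhitneyField.hasDerivWithinAt {m : ℕ} {K : Set ℝ} {P : ℕ → ℝ → ℝ}
    (hW : IsWhitneyField m K P) {k : ℕ} (hk : k < m) {x : ℝ} (hx : x ∈ K) :
    HasDerivWithinAt (P k) (P (k + 1) x) K x := by
  set T := TP (m - k) (fun l => P (k + l)) x
  have hT : HasDerivAt T (P (k + 1) x) x := hasDerivAt_TP_self (by omega) _ x
  have hTx : T x = P k x := TP_self _ _ x
  rw [hasDerivWithinAt_iff_eventually_abs_le]
  intro ε hε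
  obtain ⟨δ, hδ, hrem⟩ := hW k hk.le (ε / 2) (half_pos hε)
  filter_upwards [hasDerivWithinAt_iff_eventually_abs_le.1 hT.hasDerivWithinAt _ (half_pos hε),
    nhdsWithin_le_nhds (eventually_abs_sub_lt x (lt_min hδ one_pos)), self_mem_nhdsWithin]
    with t hTt ht htK
  have hrem' : |P k t - T t| ≤ ε / 2 * |t - x| := by
    refine (hrem x hx t htK (ht.trans_le (min_le_left _ _))).trans ?_
    gcongr
    exact pow_le_of_le_one (abs_nonneg _) (ht.le.trans (min_le_right _ _)) (by omega)
  calc |P k t - P k x - P (k + 1) x * (t - x)|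
      = |(P k t - T t) + (T t - T x - P (k + 1) x * (t - x))| := by rw [hTx]; ring_nf
    _ ≤ |P k t - T t| + |T t - T x - P (k + 1) x * (t - x)| := abs_add_le _ _
    _ ≤ ε * |t - x| := by linarith

theorem abs_sub_sub_mul_le_of_hasDerivWithinAt {f f' : ℝ → ℝ} {s : Set ℝ} (hs : Convex ℝ s)
    (hf : ∀ y ∈ s, HasDerivWithinAt f (f' y) s y) {e t η : ℝ} (he : e ∈ s) (ht : t ∈ s)
    (hη : ∀ y ∈ s, |f' y - f' e| ≤ η) : |f t - f e - f' e * (t - e)| ≤ η * |t - e| := by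
  have hg : ∀ y ∈ s, HasDerivWithinAt (fun y => f y - f' e * y) (f' y - f' e) s y :=
    fun y hy => (hf y hy).sub (by simpa using (hasDerivWithinAt_id y s).const_mul (f' e))
  have := hs.norm_image_sub_le_of_norm_hasDerivWithin_le hg hη he ht
  simp only [Real.norm_eq_abs] at this
  convert this using 2
  ring

theorem exists_endpoint_between {c d x t : ℝ} (hx : x ∉ Ioo c d) (ht : t ∈ Icc c d) :
    ∃ e, (e = c ∨ e = d) ∧ |t - e| ≤ |t - x| ∧ |e - x| ≤ |t - x| := by
  rcases le_or_gt x c with hxc | hcx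
  · refine ⟨c, Or.inl rfl, ?_, ?_⟩ <;>
      rw [abs_of_nonneg (by linarith [ht.1]), abs_of_nonneg (by linarith [ht.1])] <;>
      linarith [ht.1]
  · have hdx : d ≤ x := by by_contra h; exact hx ⟨hcx, not_le.1 h⟩
    refine ⟨d, Or.inr rfl, ?_, ?_⟩ <;>
      rw [abs_of_nonpos (by linarith [ht.2]), abs_of_nonpos (by linarith [ht.2])] <;>
      linarith [ht.2]

def horizontalJet (k : ℕ) (F G : ℕ → ℝ) : ℝ :=
  2 * ∑ j ∈ Finset.range k, (Nat.choose (k - 1) j : ℝ) * (F (k - j) * G j - G (k - j) * F j)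

theorem iteratedDerivWithin_eq_horizontalJet {s : Set ℝ} (hs : UniqueDiffOn ℝ s) {m : ℕ}
    {f g h : ℝ → ℝ} (hf : ContDiffOn ℝ (m : ℕ∞) f s) (hg : ContDiffOn ℝ (m : ℕ∞) g s)
    (hhor : ∀ t ∈ s, derivWithin h s t =
      2 * (derivWithin f s t * g t - derivWithin g s t * f t))
    {k : ℕ} (hk : 1 ≤ k) (hkm : k ≤ m) {t : ℝ} (ht : t ∈ s) :
    iteratedDerivWithin k h s t = horizontalJet k (fun j => iteratedDerivWithin j f s t)
      (fun j => iteratedDerivWithin j g s t) := by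
  obtain ⟨n, rfl⟩ : ∃ n, k = n + 1 := ⟨k - 1, by omega⟩
  have hn : ((n + 1 : ℕ) : WithTop ℕ∞) ≤ (m : ℕ∞) := by exact_mod_cast hkm
  have hf' := (hf.derivWithin hs (m := n) hn).contDiffWithinAt ht
  have hg' := (hg.derivWithin hs (m := n) hn).contDiffWithinAt ht
  have hnm : (n : WithTop ℕ∞) ≤ (m : ℕ∞) := by exact_mod_cast (by omega : n ≤ m)
  have hfn := (hf.of_le hnm).contDiffWithinAt ht
  have hgn := (hg.of_le hnm).contDiffWithinAt ht
  rw [iteratedDerivWithin_succ', iteratedDerivWithin_congr hhor ht,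
    iteratedDerivWithin_const_mul ht hs _ ((hf'.mul hgn).sub (hg'.mul hfn))]
  change 2 * iteratedDerivWithin n (derivWithin f s * g - derivWithin g s * f) s t = _
  rw [iteratedDerivWithin_sub ht hs (f := derivWithin f s * g) (g := derivWithin g s * f)
      (hf'.mul hgn) (hg'.mul hfn),
    iteratedDerivWithin_mul ht hs hf' hgn, iteratedDerivWithin_mul ht hs hg' hfn,
    ← Finset.sum_sub_distrib, horizontalJet, Nat.add_sub_cancel]
  simp_rw [← iteratedDerivWithin_succ']
  congr 1
  rw [← Finset.sum_range_reflect]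
  refine Finset.sum_congr rfl fun j hj => ?_
  have hj : j ≤ n := Nat.lt_succ_iff.1 (Finset.mem_range.1 hj)
  rw [show n + 1 - 1 - j + 1 = n + 1 - j by omega, show n - (n + 1 - 1 - j) = j by omega,
    show n + 1 - 1 - j = n - j by omega, Nat.choose_symm hj]
  ring

theorem abs_mul_sub_mul_le {u v u' v' δ M : ℝ} (hu : |u - u'| ≤ δ) (hv : |v - v'| ≤ δ)
    (hu' : |u'| ≤ M) (hv' : |v'| ≤ M) : |u * v - u' * v'| ≤ δ * (2 * M + δ) := by
  have hδ : 0 ≤ δ := (abs_nonneg _).trans hu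
  calc |u * v - u' * v'| = |(u - u') * (v - v') + (u - u') * v' + u' * (v - v')| := by ring_nf
    _ ≤ |u - u'| * |v - v'| + |u - u'| * |v'| + |u'| * |v - v'| := by
        simpa only [abs_mul] using
          abs_add_three ((u - u') * (v - v')) ((u - u') * v') (u' * (v - v'))
    _ ≤ δ * δ + δ * M + M * δ := by gcongr; exact (abs_nonneg _).trans hu'
    _ = δ * (2 * M + δ) := by ring

theorem sum_range_choose_pred_le (k : ℕ) :
    ∑ j ∈ Finset.range k, (k - 1).choose j ≤ 2 ^ k := by
  calc ∑ j ∈ Finset.range k, (k - 1).choose j ≤ ∑ j ∈ Finset.range (k - 1 + 1), (k - 1).choose j :=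
        Finset.sum_le_sum_of_subset (Finset.range_subset_range.2 (by omega))
    _ = 2 ^ (k - 1) := Nat.sum_range_choose _
    _ ≤ 2 ^ k := Nat.pow_le_pow_right two_pos (by omega)

theorem abs_horizontalJet_sub_le {k n : ℕ} (hkn : k ≤ n) {F G F' G' : ℕ → ℝ} {δ M : ℝ}
    (hF : ∀ j ≤ k, |F j - F' j| ≤ δ) (hG : ∀ j ≤ k, |G j - G' j| ≤ δ)
    (hF' : ∀ j ≤ k, |F' j| ≤ M) (hG' : ∀ j ≤ k, |G' j| ≤ M) :
    |horizontalJet k F G - horizontalJet k F' G'| ≤ 2 ^ (n + 2) * (δ * (2 * M + δ)) := by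
  have hX : 0 ≤ δ * (2 * M + δ) :=
    (abs_nonneg _).trans (abs_mul_sub_mul_le (hF 0 k.zero_le) (hG 0 k.zero_le)
      (hF' 0 k.zero_le) (hG' 0 k.zero_le))
  have hterm : ∀ j ∈ Finset.range k,
      |(k - 1).choose j * (F (k - j) * G j - G (k - j) * F j) -
        (k - 1).choose j * (F' (k - j) * G' j - G' (k - j) * F' j)| ≤
        (k - 1).choose j * (2 * (δ * (2 * M + δ))) := by
    intro j hj
    have hj : j ≤ k := (Finset.mem_range.1 hj).le
    rw [← mul_sub, abs_mul, Nat.abs_cast]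
    gcongr
    calc |F (k - j) * G j - G (k - j) * F j - (F' (k - j) * G' j - G' (k - j) * F' j)|
        = |(F (k - j) * G j - F' (k - j) * G' j) - (G (k - j) * F j - G' (k - j) * F' j)| := by
          ring_nf
      _ ≤ |F (k - j) * G j - F' (k - j) * G' j| + |G (k - j) * F j - G' (k - j) * F' j| :=
          abs_sub _ _
      _ ≤ 2 * (δ * (2 * M + δ)) := by
          linarith
            [abs_mul_sub_mul_le (hF _ (k.sub_le j)) (hG j hj) (hF' _ (k.sub_le j)) (hG' j hj),
              abs_mul_sub_mul_le (hG _ (k.sub_le j)) (hF j hj) (hG' _ (k.sub_le j)) (hF' j hj)]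
  have hchoose : (∑ j ∈ Finset.range k, ((k - 1).choose j : ℝ)) ≤ 2 ^ n :=
    (show _ ≤ (2 : ℝ) ^ k by exact_mod_cast sum_range_choose_pred_le k).trans
      (pow_le_pow_right₀ one_le_two hkn)
  rw [horizontalJet, horizontalJet, ← mul_sub, ← Finset.sum_sub_distrib, abs_mul, abs_two]
  calc 2 * |∑ j ∈ Finset.range k, _|
      ≤ 2 * ∑ j ∈ Finset.range k, (k - 1).choose j * (2 * (δ * (2 * M + δ))) := by
        gcongr
        exact (Finset.abs_sum_le_sum_abs _ _).trans (Finset.sum_le_sum hterm)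
    _ = 4 * (∑ j ∈ Finset.range k, ((k - 1).choose j : ℝ)) * (δ * (2 * M + δ)) := by
        rw [← Finset.sum_mul]; ring
    _ ≤ 4 * 2 ^ n * (δ * (2 * M + δ)) := by gcongr
    _ = 2 ^ (n + 2) * (δ * (2 * M + δ)) := by ring

theorem IsJet.exists_bound {m : ℕ} {K : Set ℝ} {P : ℕ → ℝ → ℝ} (hK : IsCompact K)
    (hP : IsJet m K P) : ∃ M, ∀ k ≤ m, ∀ x ∈ K, |P k x| ≤ M := by
  have h : ∀ k, ∃ C, k ≤ m → ∀ x ∈ K, |P k x| ≤ C := fun k => by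
    by_cases hk : k ≤ m
    · obtain ⟨C, hC⟩ := hK.exists_bound_of_continuousOn (hP k hk)
      exact ⟨C, fun _ => hC⟩
    · exact ⟨0, fun h => absurd h hk⟩
  choose C hC using h
  refine ⟨∑ k ∈ Finset.range (m + 1), |C k|, fun k hk x hx => (hC k hk x hx).trans ?_⟩
  exact (le_abs_self _).trans (Finset.single_le_sum (fun j _ => abs_nonneg (C j))
    (Finset.mem_range.2 (Nat.lt_succ_of_le hk)))

structure IsGapDecomposition (I K : Set ℝ) (a b : ℕ → ℝ) : Prop where
  left_mem : ∀ i, a i ∈ K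
  right_mem : ∀ i, b i ∈ K
  lt : ∀ i, a i < b i
  pairwise_disjoint : Pairwise (Function.onFun Disjoint fun i => Ioo (a i) (b i))
  diff_eq : I \ K = ⋃ i, Ioo (a i) (b i)

namespace IsGapDecomposition

variable {I K : Set ℝ} {a b : ℕ → ℝ}

theorem Ioo_subset_diff (hG : IsGapDecomposition I K a b) (i : ℕ) :
    Ioo (a i) (b i) ⊆ I \ K :=
  hG.diff_eq ▸ subset_iUnion (fun j => Ioo (a j) (b j)) i

theorem notMem_Ioo (hG : IsGapDecomposition I K a b) {x : ℝ} (hx : x ∈ K) (i : ℕ) :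
    x ∉ Ioo (a i) (b i) :=
  fun h => (hG.Ioo_subset_diff i h).2 hx

theorem exists_mem_Ioo (hG : IsGapDecomposition I K a b) {x : ℝ} (hx : x ∈ I) (hxK : x ∉ K) :
    ∃ i, x ∈ Ioo (a i) (b i) :=
  mem_iUnion.1 (hG.diff_eq ▸ ⟨hx, hxK⟩)

theorem endpoint_mem (hG : IsGapDecomposition I K a b) {i : ℕ} {e : ℝ}
    (he : e = a i ∨ e = b i) :
    e ∈ K ∧ e ∈ Icc (a i) (b i) := by
  rcases he with rfl | rfl
  · exact ⟨hG.left_mem i, left_mem_Icc.2 (hG.lt i).le⟩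
  · exact ⟨hG.right_mem i, right_mem_Icc.2 (hG.lt i).le⟩

theorem subset_union_iUnion_Icc (hG : IsGapDecomposition I K a b) :
    I ⊆ K ∪ ⋃ i, Icc (a i) (b i) := by
  intro x hx
  by_cases hxK : x ∈ K
  · exact Or.inl hxK
  · obtain ⟨i, hi⟩ := hG.exists_mem_Ioo hx hxK
    exact Or.inr (mem_iUnion.2 ⟨i, Ioo_subset_Icc_self hi⟩)

theorem summable_length (hG : IsGapDecomposition I K a b) {c d : ℝ} (hI : I ⊆ Icc c d) :
    Summable fun i => b i - a i := by
  refine summable_of_sum_range_le (c := d - c) (fun i => (sub_pos.2 (hG.lt i)).le) fun n => ?_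
  have hsub : ⋃ i ∈ Finset.range n, Ioo (a i) (b i) ⊆ Icc c d :=
    iUnion₂_subset fun i _ => (hG.Ioo_subset_diff i).trans (sdiff_subset.trans hI)
  have hvol := measure_mono (μ := volume) hsub
  rw [measure_biUnion_finset (fun i _ j _ hij => hG.pairwise_disjoint hij)
    (fun i _ => measurableSet_Ioo)] at hvol
  simp only [Real.volume_Ioo, Real.volume_Icc] at hvol
  rw [← ENNReal.ofReal_sum_of_nonneg (fun i _ => (sub_pos.2 (hG.lt i)).le)] at hvol
  obtain ⟨y, hy⟩ := exists_between (hG.lt 0)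
  have hcd : c ≤ d := nonempty_Icc.1 ⟨y, hI (hG.Ioo_subset_diff 0 hy).1⟩
  exact (ENNReal.ofReal_le_ofReal_iff (sub_nonneg.2 hcd)).1 hvol

theorem tendsto_length (hG : IsGapDecomposition I K a b) {c d : ℝ} (hI : I ⊆ Icc c d) :
    Tendsto (fun i => b i - a i) cofinite (𝓝[>] 0) :=
  tendsto_nhdsWithin_iff.2
    ⟨(hG.summable_length hI).tendsto_cofinite_zero, .of_forall fun i => sub_pos.2 (hG.lt i)⟩

end IsGapDecomposition

open Classical in
noncomputable def gluedJet (a b : ℕ → ℝ) (P Pc : ℕ → ℝ → ℝ) (k : ℕ) (x : ℝ) : ℝ :=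
  if h : ∃ i, x ∈ Ioo (a i) (b i) then
    iteratedDerivWithin k (Pc h.choose) (Icc (a h.choose) (b h.choose)) x
  else P k x

def GapCurvesMatchJet (m : ℕ) (a b : ℕ → ℝ) (P Pc : ℕ → ℝ → ℝ) : Prop :=
  ∀ i, ∀ k ≤ m, iteratedDerivWithin k (Pc i) (Icc (a i) (b i)) (a i) = P k (a i) ∧
    iteratedDerivWithin k (Pc i) (Icc (a i) (b i)) (b i) = P k (b i)

def GapCurvesApproachJet (m : ℕ) (a b : ℕ → ℝ) (P Pc : ℕ → ℝ → ℝ) : Prop :=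
  ∀ ε > 0, ∀ᶠ i in cofinite, ∀ k, 1 ≤ k → k ≤ m → ∀ x ∈ Icc (a i) (b i),
    |iteratedDerivWithin k (Pc i) (Icc (a i) (b i)) x - P k (a i)| ≤ ε

namespace IsGapDecomposition

variable {I K : Set ℝ} {a b : ℕ → ℝ} {m : ℕ} {P Pc : ℕ → ℝ → ℝ}

theorem gluedJet_of_mem (hG : IsGapDecomposition I K a b) {k : ℕ} {x : ℝ} (hx : x ∈ K) :
    gluedJet a b P Pc k x = P k x := by
  rw [gluedJet, dif_neg]
  rintro ⟨i, hi⟩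
  exact hG.notMem_Ioo hx i hi

theorem gluedJet_of_mem_Ioo (hG : IsGapDecomposition I K a b) {k i : ℕ} {x : ℝ}
    (hx : x ∈ Ioo (a i) (b i)) :
    gluedJet a b P Pc k x = iteratedDerivWithin k (Pc i) (Icc (a i) (b i)) x := by
  have h : ∃ j, x ∈ Ioo (a j) (b j) := ⟨i, hx⟩
  have hi : h.choose = i := by
    by_contra hne
    exact Set.disjoint_left.1 (hG.pairwise_disjoint hne) h.choose_spec hx
  rw [gluedJet, dif_pos h, hi]

theorem eqOn_gluedJet (hG : IsGapDecomposition I K a b) {k i : ℕ}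
    (hend : iteratedDerivWithin k (Pc i) (Icc (a i) (b i)) (a i) = P k (a i) ∧
      iteratedDerivWithin k (Pc i) (Icc (a i) (b i)) (b i) = P k (b i)) :
    EqOn (gluedJet a b P Pc k) (iteratedDerivWithin k (Pc i) (Icc (a i) (b i)))
      (Icc (a i) (b i)) := by
  intro x hx
  rcases eq_endpoints_or_mem_Ioo_of_mem_Icc hx with rfl | rfl | hx
  · rw [hG.gluedJet_of_mem (hG.left_mem i), hend.1]
  · rw [hG.gluedJet_of_mem (hG.right_mem i), hend.2]
  · exact hG.gluedJet_of_mem_Ioo hx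

theorem hasDerivWithinAt_gluedJet_Icc (hG : IsGapDecomposition I K a b) {i : ℕ}
    (hreg : ContDiffOn ℝ (m : ℕ∞) (Pc i) (Icc (a i) (b i)))
    (hend : GapCurvesMatchJet m a b P Pc)
    {k : ℕ} (hk : k < m) (x : ℝ) :
    HasDerivWithinAt (gluedJet a b P Pc k) (gluedJet a b P Pc (k + 1) x) (Icc (a i) (b i)) x := by
  by_cases hx : x ∈ Icc (a i) (b i)
  · have h := ((hreg.differentiableOn_iteratedDerivWithin (by exact_mod_cast hk)
      (uniqueDiffOn_Icc (hG.lt i))) x hx).hasDerivWithinAt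
    rw [← iteratedDerivWithin_succ, ← hG.eqOn_gluedJet (hend i (k + 1) hk) hx] at h
    exact h.congr (hG.eqOn_gluedJet (hend i k hk.le)) (hG.eqOn_gluedJet (hend i k hk.le) hx)
  · exact HasFDerivWithinAt.of_notMem_closure (by rwa [closure_Icc])

theorem continuousWithinAt_gluedJet_Icc (hG : IsGapDecomposition I K a b) {i : ℕ}
    (hreg : ContDiffOn ℝ (m : ℕ∞) (Pc i) (Icc (a i) (b i)))
    (hend : GapCurvesMatchJet m a b P Pc)
    (x : ℝ) : ContinuousWithinAt (gluedJet a b P Pc m) (Icc (a i) (b i)) x := by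
  by_cases hx : x ∈ Icc (a i) (b i)
  · exact ((hreg.continuousOn_iteratedDerivWithin le_rfl (uniqueDiffOn_Icc (hG.lt i))) x hx).congr
      (hG.eqOn_gluedJet (hend i m le_rfl)) (hG.eqOn_gluedJet (hend i m le_rfl) hx)
  · exact continuousWithinAt_of_notMem_closure (by rwa [closure_Icc])

theorem abs_gluedJet_sub_le (hG : IsGapDecomposition I K a b) {i : ℕ}
    (hend : GapCurvesMatchJet m a b P Pc)
    {ε : ℝ} (hi : ∀ k, 1 ≤ k → k ≤ m → ∀ x ∈ Icc (a i) (b i),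
      |iteratedDerivWithin k (Pc i) (Icc (a i) (b i)) x - P k (a i)| ≤ ε)
    {k : ℕ} (hk : 1 ≤ k) (hkm : k ≤ m) {y e : ℝ} (hy : y ∈ Icc (a i) (b i))
    (he : e ∈ Icc (a i) (b i)) :
    |gluedJet a b P Pc k y - gluedJet a b P Pc k e| ≤ 2 * ε := by
  rw [hG.eqOn_gluedJet (hend i k hkm) hy, hG.eqOn_gluedJet (hend i k hkm) he]
  have h1 := hi k hk hkm y hy
  have h2 := hi k hk hkm e he
  rw [abs_le] at h1 h2 ⊢
  constructor <;> linarith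

theorem hasDerivWithinAt_gluedJet_of_mem (hG : IsGapDecomposition I K a b)
    (hP : IsJet m K P) (hW : IsWhitneyField m K P)
    (hreg : ∀ i, ContDiffOn ℝ (m : ℕ∞) (Pc i) (Icc (a i) (b i)))
    (hend : GapCurvesMatchJet m a b P Pc)
    (hdev : GapCurvesApproachJet m a b P Pc) {k : ℕ} (hk : k < m) {x : ℝ} (hx : x ∈ K) :
    HasDerivWithinAt (gluedJet a b P Pc k) (gluedJet a b P Pc (k + 1) x) I x := by
  set g := gluedJet a b P Pc
  have hgK : ∀ j, ∀ y ∈ K, g j y = P j y := fun j y hy => hG.gluedJet_of_mem hy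
  have hWx := hW.hasDerivWithinAt hk hx
  rw [hasDerivWithinAt_iff_eventually_abs_le]
  intro ε hε
  have hgood := hdev (ε / 6) (by positivity)
  refine eventually_nhdsWithin_of_subset_union_iUnion hG.subset_union_iUnion_Icc
    (eventually_cofinite.1 hgood) ?_ (fun i _ => hasDerivWithinAt_iff_eventually_abs_le.1
      (hG.hasDerivWithinAt_gluedJet_Icc (hreg i) hend hk x) ε hε) ?_
  · rw [hgK (k + 1) x hx]
    exact hasDerivWithinAt_iff_eventually_abs_le.1 (hWx.congr (hgK k) (hgK k x hx)) ε hε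
  · -- Near `x`, a short gap is controlled through its endpoint `e` between `x` and `t`.
    have hWx' := hasDerivWithinAt_iff_eventually_abs_le.1 hWx (ε / 3) (by positivity)
    have hcont := Metric.tendsto_nhds.1 (hP (k + 1) hk x hx) (ε / 3) (by positivity)
    filter_upwards [eventually_forall_dist_le (eventually_nhdsWithin_iff.1 (hWx'.and hcont))]
      with t ht i hi hti
    obtain ⟨e, he, hte, hex⟩ := exists_endpoint_between (hG.notMem_Ioo hx i) hti
    obtain ⟨heK, heI⟩ := hG.endpoint_mem he
    obtain ⟨hPe, hP'e⟩ := ht e (by simpa only [Real.dist_eq] using hex) heK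
    rw [Real.dist_eq] at hP'e
    have hgap : |g k t - g k e - g (k + 1) e * (t - e)| ≤ ε / 3 * |t - e| :=
      abs_sub_sub_mul_le_of_hasDerivWithinAt (convex_Icc _ _)
        (fun y _ => hG.hasDerivWithinAt_gluedJet_Icc (hreg i) hend hk y) heI hti
        fun y hy => by
          linarith [hG.abs_gluedJet_sub_le hend (not_not.1 hi) (by omega) hk hy heI]
    rw [hgK k e heK, hgK (k + 1) e heK] at hgap
    rw [hgK k x hx, hgK (k + 1) x hx]
    calc |g k t - P k x - P (k + 1) x * (t - x)|
        = |(g k t - P k e - P (k + 1) e * (t - e)) + (P k e - P k x - P (k + 1) x * (e - x))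
            + (P (k + 1) e - P (k + 1) x) * (t - e)| := by ring_nf
      _ ≤ ε / 3 * |t - e| + ε / 3 * |e - x| + ε / 3 * |t - e| := by
          refine (abs_add_three _ _ _).trans ?_
          rw [abs_mul]
          gcongr
      _ ≤ ε * |t - x| := by nlinarith

theorem continuousWithinAt_gluedJet_of_mem (hG : IsGapDecomposition I K a b) (hm : 1 ≤ m)
    (hP : IsJet m K P) (hreg : ∀ i, ContDiffOn ℝ (m : ℕ∞) (Pc i) (Icc (a i) (b i)))
    (hend : GapCurvesMatchJet m a b P Pc)
    (hdev : GapCurvesApproachJet m a b P Pc) {x : ℝ} (hx : x ∈ K) :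
    ContinuousWithinAt (gluedJet a b P Pc m) I x := by
  set g := gluedJet a b P Pc
  have hgK : ∀ y ∈ K, g m y = P m y := fun y hy => hG.gluedJet_of_mem hy
  have hPx : ContinuousWithinAt (g m) K x := (hP m le_rfl x hx).congr hgK (hgK x hx)
  refine Metric.tendsto_nhds.2 fun ε hε => ?_
  have hgood := hdev (ε / 4) (by positivity)
  refine eventually_nhdsWithin_of_subset_union_iUnion hG.subset_union_iUnion_Icc
    (eventually_cofinite.1 hgood) (Metric.tendsto_nhds.1 hPx ε hε)
    (fun i _ => Metric.tendsto_nhds.1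
      (hG.continuousWithinAt_gluedJet_Icc (hreg i) hend x) ε hε) ?_
  filter_upwards [eventually_forall_dist_le (eventually_nhdsWithin_iff.1
    (Metric.tendsto_nhds.1 hPx (ε / 2) (by positivity)))] with t ht i hi hti
  obtain ⟨e, he, -, hex⟩ := exists_endpoint_between (hG.notMem_Ioo hx i) hti
  obtain ⟨heK, heI⟩ := hG.endpoint_mem he
  have hgap := hG.abs_gluedJet_sub_le hend (not_not.1 hi) hm le_rfl hti heI
  have hex' := ht e (by simpa only [Real.dist_eq] using hex) heK
  rw [Real.dist_eq] at hex' ⊢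
  calc |g m t - g m x| ≤ |g m t - g m e| + |g m e - g m x| := abs_sub_le _ _ _
    _ < ε := by linarith

theorem hasDerivWithinAt_gluedJet (hG : IsGapDecomposition I K a b)
    (hP : IsJet m K P) (hW : IsWhitneyField m K P)
    (hreg : ∀ i, ContDiffOn ℝ (m : ℕ∞) (Pc i) (Icc (a i) (b i)))
    (hend : GapCurvesMatchJet m a b P Pc)
    (hdev : GapCurvesApproachJet m a b P Pc) {k : ℕ} (hk : k < m) {x : ℝ} (hx : x ∈ I) :
    HasDerivWithinAt (gluedJet a b P Pc k) (gluedJet a b P Pc (k + 1) x) I x := by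
  by_cases hxK : x ∈ K
  · exact hG.hasDerivWithinAt_gluedJet_of_mem hP hW hreg hend hdev hk hxK
  · obtain ⟨i, hi⟩ := hG.exists_mem_Ioo hx hxK
    exact ((hG.hasDerivWithinAt_gluedJet_Icc (hreg i) hend hk x).hasDerivAt
      (Icc_mem_nhds hi.1 hi.2)).hasDerivWithinAt

theorem continuousOn_gluedJet (hG : IsGapDecomposition I K a b) (hm : 1 ≤ m)
    (hP : IsJet m K P) (hreg : ∀ i, ContDiffOn ℝ (m : ℕ∞) (Pc i) (Icc (a i) (b i)))
    (hend : GapCurvesMatchJet m a b P Pc)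
    (hdev : GapCurvesApproachJet m a b P Pc) : ContinuousOn (gluedJet a b P Pc m) I := by
  intro x hx
  by_cases hxK : x ∈ K
  · exact hG.continuousWithinAt_gluedJet_of_mem hm hP hreg hend hdev hxK
  · obtain ⟨i, hi⟩ := hG.exists_mem_Ioo hx hxK
    exact ((hG.continuousWithinAt_gluedJet_Icc (hreg i) hend x).continuousAt
      (Icc_mem_nhds hi.1 hi.2)).continuousWithinAt

theorem contDiffOn_and_eqOn_gluedJet (hG : IsGapDecomposition I K a b)
    (hI : UniqueDiffOn ℝ I) (hm : 1 ≤ m) (hP : IsJet m K P) (hW : IsWhitneyField m K P)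
    (hreg : ∀ i, ContDiffOn ℝ (m : ℕ∞) (Pc i) (Icc (a i) (b i)))
    (hend : GapCurvesMatchJet m a b P Pc)
    (hdev : GapCurvesApproachJet m a b P Pc) {f : ℝ → ℝ} (hfK : ∀ x ∈ K, f x = P 0 x)
    (hfgap : ∀ i, ∀ x ∈ Ioo (a i) (b i), f x = Pc i x) :
    ContDiffOn ℝ (m : ℕ∞) f I ∧
      ∀ k ≤ m, EqOn (iteratedDerivWithin k f I) (gluedJet a b P Pc k) I := by
  have hf : EqOn f (gluedJet a b P Pc 0) I := by
    intro x hx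
    by_cases hxK : x ∈ K
    · rw [hfK x hxK, hG.gluedJet_of_mem hxK]
    · obtain ⟨i, hi⟩ := hG.exists_mem_Ioo hx hxK
      rw [hfgap i x hi, hG.gluedJet_of_mem_Ioo hi, iteratedDerivWithin_zero]
  have hder := fun k (hk : k < m) x (hx : x ∈ I) =>
    hG.hasDerivWithinAt_gluedJet hP hW hreg hend hdev hk hx
  refine ⟨(contDiffOn_of_hasDerivWithinAt hI hder
    (hG.continuousOn_gluedJet hm hP hreg hend hdev)).congr hf, fun k hk => ?_⟩
  exact (iteratedDerivWithin_congr hf).trans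
    (iteratedDerivWithin_eqOn_of_hasDerivWithinAt hI hder k hk)

theorem gluedJet_horizontal (hG : IsGapDecomposition I K a b) (hm : 1 ≤ m)
    {F G H Fc Gc Hc : ℕ → ℝ → ℝ} (hstar : StarCond m K F G H)
    (hhor : ∀ i, ∀ t ∈ Icc (a i) (b i),
      derivWithin (Hc i) (Icc (a i) (b i)) t =
        2 * (derivWithin (Fc i) (Icc (a i) (b i)) t * Gc i t -
          derivWithin (Gc i) (Icc (a i) (b i)) t * Fc i t))
    {x : ℝ} (hx : x ∈ I) :
    gluedJet a b H Hc 1 x = 2 * (gluedJet a b F Fc 1 x * gluedJet a b G Gc 0 x -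
      gluedJet a b G Gc 1 x * gluedJet a b F Fc 0 x) := by
  by_cases hxK : x ∈ K
  · simp only [hG.gluedJet_of_mem hxK]
    simpa using hstar 1 le_rfl hm x hxK
  · obtain ⟨i, hi⟩ := hG.exists_mem_Ioo hx hxK
    simp only [hG.gluedJet_of_mem_Ioo hi, iteratedDerivWithin_one, iteratedDerivWithin_zero]
    exact hhor i x (Ioo_subset_Icc_self hi)

end IsGapDecomposition

theorem gapCurvesApproachJet_of_le {m : ℕ} {a b : ℕ → ℝ} {P Pc : ℕ → ℝ → ℝ} {ω : ℕ → ℝ}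
    (hω : Tendsto ω cofinite (𝓝 0))
    (h : ∀ i, ∀ k, 1 ≤ k → k ≤ m → ∀ x ∈ Icc (a i) (b i),
      |iteratedDerivWithin k (Pc i) (Icc (a i) (b i)) x - P k (a i)| ≤ ω i) :
    GapCurvesApproachJet m a b P Pc := fun _ hε =>
  (hω.eventually (ge_mem_nhds hε)).mono fun i hi k hk hkm x hx => (h i k hk hkm x hx).trans hi

theorem gapCurvesApproachJet_of_horizontal {m : ℕ} {K : Set ℝ} (hK : IsCompact K)
    {F G H Fc Gc Hc : ℕ → ℝ → ℝ} (hjF : IsJet m K F) (hjG : IsJet m K G)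
    (hstar : StarCond m K F G H) {a b : ℕ → ℝ} (ha : ∀ i, a i ∈ K) (hab : ∀ i, a i < b i)
    (hreg : ∀ i, ContDiffOn ℝ (m : ℕ∞) (Fc i) (Icc (a i) (b i)) ∧
      ContDiffOn ℝ (m : ℕ∞) (Gc i) (Icc (a i) (b i)))
    (hhor : ∀ i, ∀ t ∈ Icc (a i) (b i),
      derivWithin (Hc i) (Icc (a i) (b i)) t =
        2 * (derivWithin (Fc i) (Icc (a i) (b i)) t * Gc i t -
          derivWithin (Gc i) (Icc (a i) (b i)) t * Fc i t))
    {δ : ℕ → ℝ} (hδ : Tendsto δ cofinite (𝓝 0))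
    (hbound : ∀ i, ∀ k ≤ m, ∀ x ∈ Icc (a i) (b i),
      |iteratedDerivWithin k (Fc i) (Icc (a i) (b i)) x - F k (a i)| ≤ δ i ∧
      |iteratedDerivWithin k (Gc i) (Icc (a i) (b i)) x - G k (a i)| ≤ δ i) :
    GapCurvesApproachJet m a b H Hc := by
  obtain ⟨MF, hMF⟩ := hjF.exists_bound hK
  obtain ⟨MG, hMG⟩ := hjG.exists_bound hK
  set M := max MF MG
  refine gapCurvesApproachJet_of_le (ω := fun i => 2 ^ (m + 2) * (δ i * (2 * M + δ i)))
    (by simpa using (hδ.mul (tendsto_const_nhds.add hδ)).const_mul (2 ^ (m + 2)))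
    fun i k hk hkm x hx => ?_
  rw [iteratedDerivWithin_eq_horizontalJet (uniqueDiffOn_Icc (hab i)) (hreg i).1 (hreg i).2
    (hhor i) hk hkm hx, show H k (a i) = horizontalJet k (F · (a i)) (G · (a i)) from
      hstar k hk hkm (a i) (ha i)]
  exact abs_horizontalJet_sub_le hkm (fun j hj => (hbound i j (hj.trans hkm) x hx).1)
    (fun j hj => (hbound i j (hj.trans hkm) x hx).2)
    (fun j hj => (hMF j (hj.trans hkm) _ (ha i)).trans (le_max_left _ _))
    (fun j hj => (hMG j (hj.trans hkm) _ (ha i)).trans (le_max_right _ _))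

theorem glued_curve_is_Cm_horizontal_general (m : ℕ) (hm : 1 ≤ m) (K : Set ℝ) (hK : IsCompact K)
    (I : Set ℝ) (hI : I = Icc (sInf K) (sSup K))
    (F G H : ℕ → ℝ → ℝ) (hjF : IsJet m K F) (hjG : IsJet m K G) (hjH : IsJet m K H)
    (hWF : IsWhitneyField m K F) (hWG : IsWhitneyField m K G) (hWH : IsWhitneyField m K H)
    (hstar : StarCond m K F G H)
    (a b : ℕ → ℝ) (hmem : ∀ i, a i ∈ K ∧ b i ∈ K ∧ a i < b i)
    (hdisj : Pairwise (Function.onFun Disjoint fun i => Ioo (a i) (b i)))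
    (hcover : I \ K = ⋃ i, Ioo (a i) (b i))
    (β : ℝ → ℝ) (hβ : IsModulus β)
    (Fc Gc Hc : ℕ → ℝ → ℝ)
    (hreg : ∀ i, ContDiffOn ℝ (m : ℕ∞) (Fc i) (Icc (a i) (b i)) ∧
      ContDiffOn ℝ (m : ℕ∞) (Gc i) (Icc (a i) (b i)) ∧
      ContDiffOn ℝ (m : ℕ∞) (Hc i) (Icc (a i) (b i)))
    (hhor : ∀ i, ∀ t ∈ Icc (a i) (b i),
      derivWithin (Hc i) (Icc (a i) (b i)) t =
        2 * (derivWithin (Fc i) (Icc (a i) (b i)) t * Gc i t -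
          derivWithin (Gc i) (Icc (a i) (b i)) t * Fc i t))
    (hend : ∀ i, ∀ k ≤ m,
      iteratedDerivWithin k (Fc i) (Icc (a i) (b i)) (a i) = F k (a i) ∧
      iteratedDerivWithin k (Gc i) (Icc (a i) (b i)) (a i) = G k (a i) ∧
      iteratedDerivWithin k (Hc i) (Icc (a i) (b i)) (a i) = H k (a i) ∧
      iteratedDerivWithin k (Fc i) (Icc (a i) (b i)) (b i) = F k (b i) ∧
      iteratedDerivWithin k (Gc i) (Icc (a i) (b i)) (b i) = G k (b i) ∧
      iteratedDerivWithin k (Hc i) (Icc (a i) (b i)) (b i) = H k (b i))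
    (hbound : ∀ i, ∀ k ≤ m, ∀ x ∈ Icc (a i) (b i),
      |iteratedDerivWithin k (Fc i) (Icc (a i) (b i)) x - F k (a i)| ≤ 2 * β (b i - a i) ∧
      |iteratedDerivWithin k (Gc i) (Icc (a i) (b i)) x - G k (a i)| ≤ 2 * β (b i - a i))
    (𝓕 𝓖 𝓗 : ℝ → ℝ)
    (hΓK : ∀ x ∈ K, 𝓕 x = F 0 x ∧ 𝓖 x = G 0 x ∧ 𝓗 x = H 0 x)
    (hΓgap : ∀ i, ∀ x ∈ Ioo (a i) (b i), 𝓕 x = Fc i x ∧ 𝓖 x = Gc i x ∧ 𝓗 x = Hc i x) :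
    ContDiffOn ℝ (m : ℕ∞) 𝓕 I ∧ ContDiffOn ℝ (m : ℕ∞) 𝓖 I ∧ ContDiffOn ℝ (m : ℕ∞) 𝓗 I ∧
      (∀ x ∈ I, derivWithin 𝓗 I x =
        2 * (derivWithin 𝓕 I x * 𝓖 x - derivWithin 𝓖 I x * 𝓕 x)) ∧
      (∀ x ∈ K, ∀ k ≤ m,
        iteratedDerivWithin k 𝓕 I x = F k x ∧
        iteratedDerivWithin k 𝓖 I x = G k x ∧
        iteratedDerivWithin k 𝓗 I x = H k x) := by
  subst hI
  have hG : IsGapDecomposition (Icc (sInf K) (sSup K)) K a b :=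
    ⟨fun i => (hmem i).1, fun i => (hmem i).2.1, fun i => (hmem i).2.2, hdisj, hcover⟩
  have hKI : K ⊆ Icc (sInf K) (sSup K) := subset_Icc_csInf_csSup hK.bddBelow hK.bddAbove
  have hI : UniqueDiffOn ℝ (Icc (sInf K) (sSup K)) := uniqueDiffOn_Icc
    (((hKI (hG.left_mem 0)).1.trans_lt (hG.lt 0)).trans_le (hKI (hG.right_mem 0)).2)
  have hδ : Tendsto (fun i => 2 * β (b i - a i)) cofinite (𝓝 0) := by
    simpa using (hβ.2.2.2.comp (hG.tendsto_length subset_rfl)).const_mul 2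
  obtain ⟨h𝓕, h𝓕'⟩ := hG.contDiffOn_and_eqOn_gluedJet hI hm hjF hWF
    (fun i => (hreg i).1)
    (fun i k hk => ⟨(hend i k hk).1, (hend i k hk).2.2.2.1⟩)
    (gapCurvesApproachJet_of_le hδ fun i k _ hk x hx => (hbound i k hk x hx).1)
    (fun x hx => (hΓK x hx).1) (fun i x hx => (hΓgap i x hx).1)
  obtain ⟨h𝓖, h𝓖'⟩ := hG.contDiffOn_and_eqOn_gluedJet hI hm hjG hWG
    (fun i => (hreg i).2.1)
    (fun i k hk => ⟨(hend i k hk).2.1, (hend i k hk).2.2.2.2.1⟩)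
    (gapCurvesApproachJet_of_le hδ fun i k _ hk x hx => (hbound i k hk x hx).2)
    (fun x hx => (hΓK x hx).2.1) (fun i x hx => (hΓgap i x hx).2.1)
  obtain ⟨h𝓗, h𝓗'⟩ := hG.contDiffOn_and_eqOn_gluedJet hI hm hjH hWH
    (fun i => (hreg i).2.2)
    (fun i k hk => ⟨(hend i k hk).2.2.1, (hend i k hk).2.2.2.2.2⟩)
    (gapCurvesApproachJet_of_horizontal hK hjF hjG hstar hG.left_mem hG.lt
      (fun i => ⟨(hreg i).1, (hreg i).2.1⟩) hhor hδ hbound)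
    (fun x hx => (hΓK x hx).2.2) (fun i x hx => (hΓgap i x hx).2.2)
  refine ⟨h𝓕, h𝓖, h𝓗, fun x hx => ?_, fun x hx k hk => ?_⟩
  · have h := hG.gluedJet_horizontal hm hstar hhor hx
    rw [← h𝓕' 1 hm hx, ← h𝓖' 1 hm hx, ← h𝓗' 1 hm hx, ← h𝓕' 0 m.zero_le hx,
      ← h𝓖' 0 m.zero_le hx] at h
    simpa only [iteratedDerivWithin_one, iteratedDerivWithin_zero] using h
  · rw [h𝓕' k hk (hKI hx), h𝓖' k hk (hKI hx), h𝓗' k hk (hKI hx)]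
    exact ⟨hG.gluedJet_of_mem hx, hG.gluedJet_of_mem hx, hG.gluedJet_of_mem hx⟩

/-- Proposition 6.8: gluing the jets `(F, G, H)` on `K` with the horizontal
curves `(𝓕ᵢ, 𝓖ᵢ, 𝓗ᵢ)` on the complementary intervals `[aᵢ, bᵢ]` produces a `C^m` horizontal
curve on `I = [min K, max K]` whose derivatives agree with the jets on `K`. -/
theorem glued_curve_is_Cm_horizontal (m : ℕ) (hm : 1 ≤ m) (K : Set ℝ) (hK : IsCompact K)
    (hne : K.Nonempty) (I : Set ℝ) (hI : I = Icc (sInf K) (sSup K))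
    (F G H : ℕ → ℝ → ℝ) (hjF : IsJet m K F) (hjG : IsJet m K G) (hjH : IsJet m K H)
    (hWF : IsWhitneyField m K F) (hWG : IsWhitneyField m K G) (hWH : IsWhitneyField m K H)
    (hstar : StarCond m K F G H)
    (a b : ℕ → ℝ) (hmem : ∀ i, a i ∈ K ∧ b i ∈ K ∧ a i < b i)
    (hdisj : Pairwise (Function.onFun Disjoint fun i => Ioo (a i) (b i)))
    (hcover : I \ K = ⋃ i, Ioo (a i) (b i))
    (β : ℝ → ℝ) (hβ : IsModulus β)
    (Fc Gc Hc : ℕ → ℝ → ℝ)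
    (hreg : ∀ i, ContDiffOn ℝ (m : ℕ∞) (Fc i) (Icc (a i) (b i)) ∧
      ContDiffOn ℝ (m : ℕ∞) (Gc i) (Icc (a i) (b i)) ∧
      ContDiffOn ℝ (m : ℕ∞) (Hc i) (Icc (a i) (b i)))
    (hhor : ∀ i, ∀ t ∈ Icc (a i) (b i),
      derivWithin (Hc i) (Icc (a i) (b i)) t =
        2 * (derivWithin (Fc i) (Icc (a i) (b i)) t * Gc i t -
          derivWithin (Gc i) (Icc (a i) (b i)) t * Fc i t))
    (hend : ∀ i, ∀ k ≤ m,
      iteratedDerivWithin k (Fc i) (Icc (a i) (b i)) (a i) = F k (a i) ∧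
      iteratedDerivWithin k (Gc i) (Icc (a i) (b i)) (a i) = G k (a i) ∧
      iteratedDerivWithin k (Hc i) (Icc (a i) (b i)) (a i) = H k (a i) ∧
      iteratedDerivWithin k (Fc i) (Icc (a i) (b i)) (b i) = F k (b i) ∧
      iteratedDerivWithin k (Gc i) (Icc (a i) (b i)) (b i) = G k (b i) ∧
      iteratedDerivWithin k (Hc i) (Icc (a i) (b i)) (b i) = H k (b i))
    (hbound : ∀ i, ∀ k ≤ m, ∀ x ∈ Icc (a i) (b i),
      |iteratedDerivWithin k (Fc i) (Icc (a i) (b i)) x - F k (a i)| ≤ 2 * β (b i - a i) ∧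
      |iteratedDerivWithin k (Gc i) (Icc (a i) (b i)) x - G k (a i)| ≤ 2 * β (b i - a i))
    (𝓕 𝓖 𝓗 : ℝ → ℝ)
    (hΓK : ∀ x ∈ K, 𝓕 x = F 0 x ∧ 𝓖 x = G 0 x ∧ 𝓗 x = H 0 x)
    (hΓgap : ∀ i, ∀ x ∈ Ioo (a i) (b i), 𝓕 x = Fc i x ∧ 𝓖 x = Gc i x ∧ 𝓗 x = Hc i x) :
    ContDiffOn ℝ (m : ℕ∞) 𝓕 I ∧ ContDiffOn ℝ (m : ℕ∞) 𝓖 I ∧ ContDiffOn ℝ (m : ℕ∞) 𝓗 I ∧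
      (∀ x ∈ I, derivWithin 𝓗 I x =
        2 * (derivWithin 𝓕 I x * 𝓖 x - derivWithin 𝓖 I x * 𝓕 x)) ∧
      (∀ x ∈ K, ∀ k ≤ m,
        iteratedDerivWithin k 𝓕 I x = F k x ∧
        iteratedDerivWithin k 𝓖 I x = G k x ∧
        iteratedDerivWithin k 𝓗 I x = H k x) :=
  glued_curve_is_Cm_horizontal_general m hm K hK I hI F G H hjF hjG hjH hWF hWG hWH hstar a b hmem
    hdisj hcover β hβ Fc Gc Hc hreg hhor hend hbound 𝓕 𝓖 𝓗 hΓK hΓgap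
end

section
/- Let m ≥ 1 and let K = {1} ∪ ∪_{n=0}^∞ [1 − 2^{−n}, 1 − (3/4)·2^{−n}] ⊂ ℝ. Define a jet H of order m on K by H^0(t) = 3^{−mn} for t ∈ [1 − 2^{−n}, 1 − (3/4)·2^{−n}], H^0(1) = 0, and H^k ≡ 0 on K for 1 ≤ k ≤ m. Then H is a Whitney field of class C^m on K. -/
open Set

/-!
Away from `1` the function `H⁰` is locally constant, so only pairs of points in different
intervals matter. If the left one lies in the `n`-th interval, the two points are at least
`2⁻ⁿ/4` apart while the values differ by at most `3^{-mn}`, and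
`3^{-mn} / (2⁻ⁿ/4)^m = 4^m (2/3)^{mn} → 0`. The higher components vanish, so the Taylor
polynomials are constant and this is the whole Whitney condition.
-/

section Taylor

variable {m : ℕ} {K : Set ℝ} {F : ℕ → ℝ → ℝ}

lemma taylor_sum_eq_of_higher_eq_zero (hF : ∀ k, 1 ≤ k → k ≤ m → ∀ t ∈ K, F k t = 0)
    {k : ℕ} (hk : k ≤ m) {a : ℝ} (ha : a ∈ K) (x : ℝ) :
    ∑ l ∈ Finset.range (m - k + 1), F (k + l) a * x ^ l / (Nat.factorial l : ℝ) = F k a := by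
  rw [Finset.sum_eq_single_of_mem 0 (Finset.mem_range.mpr (Nat.succ_pos _))]
  · simp
  · intro l hl hl0
    rw [hF (k + l) (by omega) (by have := Finset.mem_range.mp hl; omega) a ha]
    simp

theorem isWhitneyField_of_higher_eq_zero (hF : ∀ k, 1 ≤ k → k ≤ m → ∀ t ∈ K, F k t = 0)
    (hF0 : ∀ ε > (0 : ℝ), ∃ δ > (0 : ℝ), ∀ a ∈ K, ∀ b ∈ K, |b - a| < δ →
      |F 0 b - F 0 a| ≤ ε * |b - a| ^ m) :
    IsWhitneyField m K F := by
  intro k hk ε hε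
  rcases Nat.eq_zero_or_pos k with rfl | hk1
  · obtain ⟨δ, hδ, hδF⟩ := hF0 ε hε
    refine ⟨δ, hδ, fun a ha b hb hab => ?_⟩
    rw [taylor_sum_eq_of_higher_eq_zero hF hk ha]
    exact hδF a ha b hb hab
  · refine ⟨1, one_pos, fun a ha b hb _ => ?_⟩
    rw [taylor_sum_eq_of_higher_eq_zero hF hk ha, hF k hk1 hk a ha, hF k hk1 hk b hb,
      sub_zero, abs_zero]
    positivity

end Taylor

def dyadicBlock (n : ℕ) : Set ℝ := Icc (1 - (1 / 2 : ℝ) ^ n) (1 - (3 / 4) * (1 / 2 : ℝ) ^ n)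

lemma quarter_pow_le_one_sub_of_mem_dyadicBlock {n : ℕ} {x : ℝ} (hx : x ∈ dyadicBlock n) :
    (1 / 4 : ℝ) * (1 / 2) ^ n ≤ 1 - x := by
  have := hx.2
  nlinarith [pow_pos (show (0 : ℝ) < 1 / 2 by norm_num) n]

lemma quarter_pow_le_sub_of_mem_dyadicBlock {n n' : ℕ} (h : n < n') {x y : ℝ}
    (hx : x ∈ dyadicBlock n) (hy : y ∈ dyadicBlock n') :
    (1 / 4 : ℝ) * (1 / 2) ^ n ≤ y - x := by
  have hpow : (1 / 2 : ℝ) ^ n' ≤ (1 / 2) ^ n * (1 / 2) := by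
    rw [← pow_succ]
    exact pow_le_pow_of_le_one (by norm_num) (by norm_num) h
  have := hx.2
  have := hy.1
  linarith

lemma one_third_pow_mul_le {m n N : ℕ} (hm : 1 ≤ m) {ε : ℝ} (hN : (2 / 3 : ℝ) ^ N < ε / 4 ^ m)
    {x : ℝ} (hnx : (1 / 4 : ℝ) * (1 / 2) ^ n ≤ x) (hxN : x < (1 / 4) * (1 / 2) ^ N) :
    (1 / 3 : ℝ) ^ (m * n) ≤ ε * x ^ m := by
  have hε : 0 < ε := by
    have := (pow_pos (show (0 : ℝ) < 2 / 3 by norm_num) N).trans hN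
    exact (div_pos_iff_of_pos_right (by positivity)).mp this
  have hNn : N < n :=
    (pow_lt_pow_iff_right_of_lt_one₀ (by norm_num : (0 : ℝ) < 1 / 2) (by norm_num)).mp
      (by linarith)
  have hNmn : N ≤ m * n := hNn.le.trans (Nat.le_mul_of_pos_left n hm)
  calc (1 / 3 : ℝ) ^ (m * n) = (2 / 3) ^ (m * n) * (1 / 2) ^ (m * n) := by
        rw [← mul_pow]; norm_num
    _ ≤ (ε / 4 ^ m) * (1 / 2) ^ (m * n) := by
        gcongr
        exact (pow_le_pow_of_le_one (by norm_num) (by norm_num) hNmn).trans hN.le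
    _ = ε * ((1 / 4) * (1 / 2) ^ n) ^ m := by
        rw [mul_pow, ← pow_mul, Nat.mul_comm n m, one_div_pow (4 : ℝ)]
        ring
    _ ≤ ε * x ^ m := by gcongr

def dyadicSet : Set ℝ := {1} ∪ ⋃ n : ℕ, dyadicBlock n

section DyadicJet

variable {m : ℕ} {f : ℝ → ℝ}

lemma abs_sub_le_and_le_abs_sub_of_mem_dyadicBlock
    (hf : ∀ n : ℕ, ∀ t ∈ dyadicBlock n, f t = (1 / 3 : ℝ) ^ (m * n)) (hf1 : f 1 = 0)
    {n : ℕ} {a b : ℝ} (ha : a ∈ dyadicBlock n)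
    (hb : b = 1 ∨ ∃ n', n < n' ∧ b ∈ dyadicBlock n') :
    |f b - f a| ≤ (1 / 3 : ℝ) ^ (m * n) ∧ (1 / 4 : ℝ) * (1 / 2) ^ n ≤ |b - a| := by
  obtain ⟨hfb0, hfb, hgap⟩ : 0 ≤ f b ∧ f b ≤ (1 / 3 : ℝ) ^ (m * n) ∧
      (1 / 4 : ℝ) * (1 / 2) ^ n ≤ b - a := by
    rcases hb with rfl | ⟨n', hnn', hb⟩
    · exact ⟨hf1.ge, hf1.le.trans (by positivity), quarter_pow_le_one_sub_of_mem_dyadicBlock ha⟩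
    · rw [hf n' b hb]
      exact ⟨by positivity, pow_le_pow_of_le_one (by norm_num) (by norm_num)
        (Nat.mul_le_mul_left m hnn'.le), quarter_pow_le_sub_of_mem_dyadicBlock hnn' ha hb⟩
  refine ⟨?_, hgap.trans (le_abs_self _)⟩
  rw [hf n a ha]
  exact abs_sub_le_of_nonneg_of_le hfb0 hfb (by positivity) le_rfl

lemma exists_abs_sub_le_and_le_abs_sub_of_ne
    (hf : ∀ n : ℕ, ∀ t ∈ dyadicBlock n, f t = (1 / 3 : ℝ) ^ (m * n)) (hf1 : f 1 = 0)
    {a b : ℝ} (ha : a ∈ dyadicSet) (hb : b ∈ dyadicSet) (hne : f a ≠ f b) :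
    ∃ n : ℕ, |f b - f a| ≤ (1 / 3 : ℝ) ^ (m * n) ∧ (1 / 4 : ℝ) * (1 / 2) ^ n ≤ |b - a| := by
  have key := @abs_sub_le_and_le_abs_sub_of_mem_dyadicBlock m f hf hf1
  rcases ha with rfl | ha <;> rcases hb with rfl | hb
  · exact absurd rfl hne
  · obtain ⟨n, hb⟩ := mem_iUnion.mp hb
    exact ⟨n, by simpa only [abs_sub_comm] using key hb (Or.inl rfl)⟩
  · obtain ⟨n, ha⟩ := mem_iUnion.mp ha
    exact ⟨n, key ha (Or.inl rfl)⟩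
  · obtain ⟨n, ha⟩ := mem_iUnion.mp ha
    obtain ⟨n', hb⟩ := mem_iUnion.mp hb
    rcases lt_trichotomy n n' with h | rfl | h
    · exact ⟨n, key ha (Or.inr ⟨n', h, hb⟩)⟩
    · exact absurd ((hf n a ha).trans (hf n b hb).symm) hne
    · exact ⟨n', by simpa only [abs_sub_comm] using key hb (Or.inr ⟨n, h, ha⟩)⟩

lemma abs_sub_le_mul_abs_sub_pow_of_dyadic (hm : 1 ≤ m)
    (hf : ∀ n : ℕ, ∀ t ∈ dyadicBlock n, f t = (1 / 3 : ℝ) ^ (m * n)) (hf1 : f 1 = 0)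
    {ε : ℝ} (hε : 0 < ε) :
    ∃ δ > (0 : ℝ), ∀ a ∈ dyadicSet, ∀ b ∈ dyadicSet, |b - a| < δ →
      |f b - f a| ≤ ε * |b - a| ^ m := by
  obtain ⟨N, hN⟩ := exists_pow_lt_of_lt_one (by positivity : 0 < ε / 4 ^ m)
    (by norm_num : (2 / 3 : ℝ) < 1)
  refine ⟨(1 / 4) * (1 / 2) ^ N, by positivity, fun a ha b hb hab => ?_⟩
  by_cases hfab : f a = f b
  · rw [hfab, sub_self, abs_zero]
    positivity
  obtain ⟨n, hfn, hgap⟩ := exists_abs_sub_le_and_le_abs_sub_of_ne hf hf1 ha hb hfab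
  exact hfn.trans (one_third_pow_mul_le hm hN hgap hab)

end DyadicJet

/-- from the proof of Proposition 4.1: the jet `H` on the compact set
`K = {1} ∪ ⋃ₙ [1 - 2⁻ⁿ, 1 - (3/4)·2⁻ⁿ]` given by `H⁰ = 3^{-mn}` on the `n`-th interval,
`H⁰(1) = 0`, and `Hᵏ ≡ 0` for `1 ≤ k ≤ m`, is a Whitney field of class `C^m` on `K`. -/
theorem example_jet_is_whitney_field (m : ℕ) (hm : 1 ≤ m)
    (K : Set ℝ)
    (hKdef : K = {1} ∪ ⋃ n : ℕ, Icc (1 - (1 / 2 : ℝ) ^ n) (1 - (3 / 4) * (1 / 2 : ℝ) ^ n))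
    (H : ℕ → ℝ → ℝ)
    (hH0 : ∀ n : ℕ, ∀ t ∈ Icc (1 - (1 / 2 : ℝ) ^ n) (1 - (3 / 4) * (1 / 2 : ℝ) ^ n),
      H 0 t = (1 / 3 : ℝ) ^ (m * n))
    (hH1 : H 0 1 = 0)
    (hHk : ∀ k, 1 ≤ k → k ≤ m → ∀ t ∈ K, H k t = 0) :
    IsWhitneyField m K H := by
  subst hKdef
  exact isWhitneyField_of_higher_eq_zero hHk fun _ hε =>
    abs_sub_le_mul_abs_sub_pow_of_dyadic hm hH0 hH1 hε
end

section
/- Let m ≥ 1 and for n ∈ ℕ set c_n = 1 − 2^{−n} and d_n = 1 − (3/4)·2^{−n}. Define H(t) = 3^{−mn} for t ∈ [c_n, d_n] and H(1) = 0 on K = {1} ∪ ∪_{n=0}^∞ [c_n, d_n]. Then c_{n+1} − d_n = 2^{−(n+2)} → 0 as n → ∞, while (H(d_n) − H(c_{n+1}))/(c_{n+1} − d_n)^{2m} = ((3^m − 1)·16^m/3^m)·(4/3)^{mn} → ∞ as n → ∞. In particular, there is no δ > 0 such that |H(b) − H(a)| ≤ (b−a)^{2m} for all a, b ∈ K with 0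 < b − a < δ. -/
open Set Filter Topology

/-! Between the consecutive intervals `[c_n, d_n]` and `[c_{n+1}, d_{n+1}]` of `K` the function
`H` drops by `3^{-mn}(1 - 3^{-m})` across a gap of length `2^{-(n+2)}`, so the drop divided by the
`2m`-th power of the gap grows like `(4/3)^{mn}`. Gaps shrinking to `0` with quotients tending to
infinity rule out any bound `|H b - H a| ≤ (b - a)^{2m}` on short gaps. -/

theorem not_exists_abs_sub_le_pow_of_tendsto_atTop {f : ℝ → ℝ} {K : Set ℝ} {a b : ℕ → ℝ}
    (k : ℕ) (ha : ∀ n, a n ∈ K) (hb : ∀ n, b n ∈ K) (hab : ∀ n, a n < b n)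
    (hgap : Tendsto (fun n => b n - a n) atTop (𝓝 0))
    (hquot : Tendsto (fun n => (f (a n) - f (b n)) / (b n - a n) ^ k) atTop atTop) :
    ¬ ∃ δ > (0 : ℝ), ∀ x ∈ K, ∀ y ∈ K, 0 < y - x → y - x < δ →
        |f y - f x| ≤ (y - x) ^ k := by
  rintro ⟨δ, hδ, hbound⟩
  obtain ⟨n, hn_quot, hn_gap⟩ :=
    ((hquot.eventually_gt_atTop 1).and (hgap.eventually_lt_const hδ)).exists
  have hpos : 0 < b n - a n := sub_pos.2 (hab n)
  have hle : f (a n) - f (b n) ≤ (b n - a n) ^ k :=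
    (le_abs_self _).trans ((abs_sub_comm _ _).trans_le (hbound _ (ha n) _ (hb n) hpos hn_gap))
  exact hn_quot.not_ge ((div_le_one (by positivity)).2 hle)

theorem one_sub_half_pow_le (n : ℕ) : (1 : ℝ) - (1 / 2) ^ n ≤ 1 - 3 / 4 * (1 / 2) ^ n := by
  have : (0 : ℝ) ≤ (1 / 2) ^ n := by positivity
  linarith

theorem one_sub_half_pow_succ_sub (n : ℕ) :
    (1 - (1 / 2 : ℝ) ^ (n + 1)) - (1 - 3 / 4 * (1 / 2) ^ n) = (1 / 2) ^ (n + 2) := by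
  ring

theorem third_pow_sub_div_half_pow (m n : ℕ) :
    ((1 / 3 : ℝ) ^ (m * n) - (1 / 3) ^ (m * (n + 1))) / ((1 / 2 : ℝ) ^ (n + 2)) ^ (2 * m) =
      (((3 : ℝ) ^ m - 1) * 16 ^ m / 3 ^ m) * (4 / 3 : ℝ) ^ (m * n) := by
  have h16 : (16 : ℝ) = 2 ^ 4 := by norm_num
  have h4 : (4 : ℝ) = 2 ^ 2 := by norm_num
  simp only [one_div, inv_pow, div_pow, ← pow_mul, h16, h4]
  field_simp
  ring

theorem tendsto_const_mul_pow_mul_atTop {C r : ℝ} {m : ℕ} (hC : 0 < C) (hr : 1 < r)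
    (hm : m ≠ 0) : Tendsto (fun n : ℕ => C * r ^ (m * n)) atTop atTop := by
  simp only [pow_mul]
  exact (tendsto_pow_atTop_atTop_of_one_lt (one_lt_pow₀ hr hm)).const_mul_atTop hC

theorem example_quotient_blows_up_general (m : ℕ) (hm : 1 ≤ m)
    (c d : ℕ → ℝ)
    (hc : ∀ n, c n = 1 - (1 / 2 : ℝ) ^ n)
    (hd : ∀ n, d n = 1 - (3 / 4) * (1 / 2 : ℝ) ^ n)
    (K : Set ℝ) (hKdef : K = {1} ∪ ⋃ n : ℕ, Icc (c n) (d n))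
    (H : ℝ → ℝ)
    (hH0 : ∀ n : ℕ, ∀ t ∈ Icc (c n) (d n), H t = (1 / 3 : ℝ) ^ (m * n)) :
    (∀ n, c (n + 1) - d n = (1 / 2 : ℝ) ^ (n + 2)) ∧
    Tendsto (fun n => c (n + 1) - d n) atTop (nhds 0) ∧
    (∀ n, (H (d n) - H (c (n + 1))) / (c (n + 1) - d n) ^ (2 * m) =
      (((3 : ℝ) ^ m - 1) * 16 ^ m / 3 ^ m) * (4 / 3 : ℝ) ^ (m * n)) ∧
    Tendsto (fun n => (H (d n) - H (c (n + 1))) / (c (n + 1) - d n) ^ (2 * m)) atTop atTop ∧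
    ¬ ∃ δ > (0 : ℝ), ∀ a ∈ K, ∀ b ∈ K, 0 < b - a → b - a < δ →
        |H b - H a| ≤ (b - a) ^ (2 * m) := by
  have hm0 : m ≠ 0 := Nat.one_le_iff_ne_zero.mp hm
  have hcd : ∀ n, c n ≤ d n := fun n => by rw [hc, hd]; exact one_sub_half_pow_le n
  have hgap : ∀ n, c (n + 1) - d n = (1 / 2 : ℝ) ^ (n + 2) := fun n => by
    rw [hc, hd]; exact one_sub_half_pow_succ_sub n
  have hgap_tendsto : Tendsto (fun n => c (n + 1) - d n) atTop (𝓝 0) := by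
    simp only [hgap]
    exact (tendsto_pow_atTop_nhds_zero_of_lt_one (by norm_num) (by norm_num)).comp
      (tendsto_add_atTop_nat 2)
  have hquot : ∀ n, (H (d n) - H (c (n + 1))) / (c (n + 1) - d n) ^ (2 * m) =
      (((3 : ℝ) ^ m - 1) * 16 ^ m / 3 ^ m) * (4 / 3 : ℝ) ^ (m * n) := fun n => by
    rw [hH0 n _ ⟨hcd n, le_rfl⟩, hH0 (n + 1) _ ⟨le_rfl, hcd (n + 1)⟩, hgap]
    exact third_pow_sub_div_half_pow m n
  have hC : (0 : ℝ) < ((3 : ℝ) ^ m - 1) * 16 ^ m / 3 ^ m := by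
    have : (1 : ℝ) < 3 ^ m := one_lt_pow₀ (by norm_num) hm0
    have : (0 : ℝ) < 3 ^ m - 1 := by linarith
    positivity
  have hquot_tendsto := (tendsto_const_mul_pow_mul_atTop hC (by norm_num) hm0).congr
    fun n => (hquot n).symm
  have hmemK : ∀ n, ∀ t ∈ Icc (c n) (d n), t ∈ K := fun n t ht => by
    rw [hKdef]; exact Or.inr (mem_iUnion.2 ⟨n, ht⟩)
  refine ⟨hgap, hgap_tendsto, hquot, hquot_tendsto, ?_⟩
  exact not_exists_abs_sub_le_pow_of_tendsto_atTop _ (fun n => hmemK n _ ⟨hcd n, le_rfl⟩)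
    (fun n => hmemK (n + 1) _ ⟨le_rfl, hcd (n + 1)⟩)
    (fun n => sub_pos.1 (by rw [hgap]; positivity)) hgap_tendsto hquot_tendsto

/-- computation in Proposition 4.1: for the example jet `H`, the gaps
`c_{n+1} - d_n = 2^{-(n+2)}` tend to `0` while the quotients
`(H(d_n) - H(c_{n+1}))/(c_{n+1} - d_n)^{2m}` blow up; in particular the area-velocity
condition fails for the triple `(0, 0, H)`. -/
theorem example_quotient_blows_up (m : ℕ) (hm : 1 ≤ m)
    (c d : ℕ → ℝ)
    (hc : ∀ n, c n = 1 - (1 / 2 : ℝ) ^ n)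
    (hd : ∀ n, d n = 1 - (3 / 4) * (1 / 2 : ℝ) ^ n)
    (K : Set ℝ) (hKdef : K = {1} ∪ ⋃ n : ℕ, Icc (c n) (d n))
    (H : ℝ → ℝ)
    (hH0 : ∀ n : ℕ, ∀ t ∈ Icc (c n) (d n), H t = (1 / 3 : ℝ) ^ (m * n))
    (hH1 : H 1 = 0) :
    (∀ n, c (n + 1) - d n = (1 / 2 : ℝ) ^ (n + 2)) ∧
    Tendsto (fun n => c (n + 1) - d n) atTop (nhds 0) ∧
    (∀ n, (H (d n) - H (c (n + 1))) / (c (n + 1) - d n) ^ (2 * m) =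
      (((3 : ℝ) ^ m - 1) * 16 ^ m / 3 ^ m) * (4 / 3 : ℝ) ^ (m * n)) ∧
    Tendsto (fun n => (H (d n) - H (c (n + 1))) / (c (n + 1) - d n) ^ (2 * m)) atTop atTop ∧
    ¬ ∃ δ > (0 : ℝ), ∀ a ∈ K, ∀ b ∈ K, 0 < b - a → b - a < δ →
        |H b - H a| ≤ (b - a) ^ (2 * m) :=
  example_quotient_blows_up_general m hm c d hc hd K hKdef H hH0
end
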